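/- arXiv:1701.07536 — 5 statements merged into one kernel-verified Lean document; each statement's English description precedes it below -/
import Mathlib

section
/- Let m ≥ 2 and n ≥ 1. If A ∈ ℝ^{[m,n]} is a nonsingular M-tensor, then its partial symmetrization Â is also a nonsingular M-tensor. -/
/-!
We model an `m`-th order, `n`-dimensional real tensor with `m = k + 2` (so `m ≥ 2`)
as a map `Fin n → (Fin (k+1) → Fin n) → ℝ`: the first index, followed by the
`m - 1 = k + 1` trailing indices.
-/

noncomputable section

/-- The vector `A x^{m-1}`. -/
def tvec (n k : ℕ) (A : Fin n → (Fin (k + 1) → Fin n) → ℝ) (x : Fin n → ℝ) :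
    Fin n → ℝ :=
  fun i => ∑ g : Fin (k + 1) → Fin n, A i g * ∏ j, x (g j)

/-- The `n × n` matrix `A x^{m-2}`, with `(i,j)` entry
`∑_{i₃,…,i_m} A_{i j i₃ ⋯ i_m} x_{i₃} ⋯ x_{i_m}`. -/
def tmat (n k : ℕ) (A : Fin n → (Fin (k + 1) → Fin n) → ℝ) (x : Fin n → ℝ) :
    Matrix (Fin n) (Fin n) ℝ :=
  fun i j => ∑ h : Fin k → Fin n, A i (Fin.cons j h) * ∏ l, x (h l)

/-- The identity tensor `I`: entries `1` when all indices coincide, `0` otherwise. -/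
def idT (n k : ℕ) : Fin n → (Fin (k + 1) → Fin n) → ℝ :=
  fun i g => if ∀ j, g j = i then 1 else 0

/-- `lam ∈ ℂ` is an eigenvalue of the tensor `B`: `B x^{m-1} = lam * x^{[m-1]}` for some
nonzero complex vector `x`. -/
def IsEig (n k : ℕ) (B : Fin n → (Fin (k + 1) → Fin n) → ℝ) (lam : ℂ) : Prop :=
  ∃ x : Fin n → ℂ, x ≠ 0 ∧
    ∀ i, ∑ g : Fin (k + 1) → Fin n, (B i g : ℂ) * ∏ j, x (g j) = lam * (x i) ^ (k + 1)

/-- The spectral radius of a tensor: supremum of moduli of its eigenvalues. -/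
def specRad (n k : ℕ) (B : Fin n → (Fin (k + 1) → Fin n) → ℝ) : ℝ :=
  sSup {r : ℝ | ∃ lam : ℂ, IsEig n k B lam ∧ r = ‖lam‖}

/-- A tensor is nonnegative if all its entries are nonnegative. -/
def NonnegT (n k : ℕ) (B : Fin n → (Fin (k + 1) → Fin n) → ℝ) : Prop :=
  ∀ i g, 0 ≤ B i g

/-- `A` is a nonsingular M-tensor: `A = s I - B` with `B` nonnegative and `s > ρ(B)`. -/
def IsNsMTensor (n k : ℕ) (A : Fin n → (Fin (k + 1) → Fin n) → ℝ) : Prop :=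
  ∃ s : ℝ, ∃ B : Fin n → (Fin (k + 1) → Fin n) → ℝ,
    NonnegT n k B ∧ specRad n k B < s ∧
    A = fun i g => s * idT n k i g - B i g

/-- The partial symmetrization `Â` of `A` over the trailing `m - 1` indices. -/
def psym (n k : ℕ) (A : Fin n → (Fin (k + 1) → Fin n) → ℝ) :
    Fin n → (Fin (k + 1) → Fin n) → ℝ :=
  fun i g => (1 / (Nat.factorial (k + 1) : ℝ)) *
    ∑ π : Equiv.Perm (Fin (k + 1)), A i (g ∘ π)

end

/-!
Partial symmetrization is linear, fixes the identity tensor and preserves nonnegativity.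
Since `∏ j, x (g j)` is invariant under permuting `g`, it also leaves the map `x ↦ B x^{m-1}`
unchanged, so `B` and `B̂` have the same eigenvalues and spectral radius. Hence
`A = sI - B` gives `Â = sI - B̂` with `B̂ ≥ 0` and `ρ(B̂) = ρ(B) < s`.
-/

section Symmetrization

variable {n k : ℕ}

theorem sum_comp_perm_mul_prod {ι α R : Type*} [Fintype ι] [DecidableEq ι] [Fintype α]
    [DecidableEq α] [CommSemiring R] (f : (ι → α) → R) (x : α → R) (π : Equiv.Perm ι) :
    ∑ g : ι → α, f (g ∘ π) * ∏ j, x (g j) = ∑ g : ι → α, f g * ∏ j, x (g j) := by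
  refine Fintype.sum_equiv (π.symm.arrowCongr (Equiv.refl α)) _ _ fun g => ?_
  change f (g ∘ π) * _ = f (g ∘ π) * ∏ j, x (g (π j))
  rw [Equiv.prod_comp π fun j => x (g j)]

theorem psym_eq_self_of_comp_perm {A : Fin n → (Fin (k + 1) → Fin n) → ℝ}
    (hA : ∀ i g (π : Equiv.Perm (Fin (k + 1))), A i (g ∘ π) = A i g) : psym n k A = A := by
  funext i g
  simp only [psym, hA, Finset.sum_const, Finset.card_univ, Fintype.card_perm,
    Fintype.card_fin, nsmul_eq_mul]
  field_simp

theorem idT_comp_perm (i : Fin n) (g : Fin (k + 1) → Fin n) (π : Equiv.Perm (Fin (k + 1))) :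
    idT n k i (g ∘ π) = idT n k i g := by
  simp only [idT, Function.comp_apply, π.forall_congr_right (q := fun j => g j = i)]

theorem psym_idT : psym n k (idT n k) = idT n k :=
  psym_eq_self_of_comp_perm idT_comp_perm

theorem psym_smul_sub (s : ℝ) (A B : Fin n → (Fin (k + 1) → Fin n) → ℝ) :
    psym n k (fun i g => s * A i g - B i g) = fun i g => s * psym n k A i g - psym n k B i g := by
  funext i g
  simp only [psym, Finset.sum_sub_distrib, ← Finset.mul_sum]
  ring

theorem NonnegT.psym {B : Fin n → (Fin (k + 1) → Fin n) → ℝ} (hB : NonnegT n k B) :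
    NonnegT n k (psym n k B) :=
  fun i g => mul_nonneg (by positivity) (Finset.sum_nonneg fun π _ => hB i (g ∘ π))

theorem sum_psym_mul_prod (B : Fin n → (Fin (k + 1) → Fin n) → ℝ) (x : Fin n → ℂ) (i : Fin n) :
    ∑ g : Fin (k + 1) → Fin n, (psym n k B i g : ℂ) * ∏ j, x (g j)
      = ∑ g : Fin (k + 1) → Fin n, (B i g : ℂ) * ∏ j, x (g j) := by
  have hfact : ((k + 1).factorial : ℂ) ≠ 0 := by exact_mod_cast (k + 1).factorial_ne_zero
  simp only [psym, Complex.ofReal_mul, Complex.ofReal_sum, Complex.ofReal_div,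
    Complex.ofReal_one, Complex.ofReal_natCast, mul_assoc, Finset.sum_mul, ← Finset.mul_sum]
  rw [Finset.sum_comm]
  simp only [sum_comp_perm_mul_prod (fun g => (B i g : ℂ)) x, Finset.sum_const,
    Finset.card_univ, Fintype.card_perm, Fintype.card_fin, nsmul_eq_mul]
  field_simp

theorem isEig_psym_iff (B : Fin n → (Fin (k + 1) → Fin n) → ℝ) (lam : ℂ) :
    IsEig n k (psym n k B) lam ↔ IsEig n k B lam := by
  simp only [IsEig, sum_psym_mul_prod]

theorem specRad_psym (B : Fin n → (Fin (k + 1) → Fin n) → ℝ) :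
    specRad n k (psym n k B) = specRad n k B := by
  simp only [specRad, isEig_psym_iff]

end Symmetrization

theorem psym_isNsMTensor_general (k n : ℕ)
    (A : Fin n → (Fin (k + 1) → Fin n) → ℝ) (hA : IsNsMTensor n k A) :
    IsNsMTensor n k (psym n k A) := by
  obtain ⟨s, B, hB, hs, rfl⟩ := hA
  refine ⟨s, psym n k B, hB.psym, (specRad_psym B).symm ▸ hs, ?_⟩
  rw [psym_smul_sub, psym_idT]

/-- If `A` is a nonsingular M-tensor, so is its partial symmetrization `Â`. -/
theorem psym_isNsMTensor (k n : ℕ) (hn : 1 ≤ n)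
    (A : Fin n → (Fin (k + 1) → Fin n) → ℝ) (hA : IsNsMTensor n k A) :
    IsNsMTensor n k (psym n k A) :=
  psym_isNsMTensor_general k n A hA
end

section
/- Let m ≥ 2 and n ≥ 1. Suppose A ∈ ℝ^{[m,n]} is a nonsingular M-tensor and b ∈ ℝⁿ is a positive vector. Then there exists a real number τ₀ > 0 such that for every t ∈ [0, 1+τ₀) the system (t A + (1−t) I) x^{m-1} = b has a unique positive solution x ∈ ℝⁿ (i.e., there is exactly one x with all entries positive satisfying the equation). -/
/-!
Write `A = sI - B` with `B ≥ 0` and `ρ(B) < s`. The positive tensors `B + ε` have positive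
eigenvectors in the simplex (maximize the lower Collatz–Wielandt bound; at a maximizer that is
not an eigenvector, applying `B` strictly improves the bound), and a limit `ε → 0` produces an
eigenvalue of `B`. Hence there are `z > 0` and `ρ < s` with `B z^{m-1} ≤ ρ z^{[m-1]}`.

Since `tA + (1-t)I = σI - tB` with `σ = 1 + t(s-1)`, and `tρ < σ` for `0 ≤ t < 1 + (s - ρ)`, a
large multiple of `z` is a supersolution of `σ x^{[m-1]} = b + tB x^{m-1}`. The least fixed point
of the monotone map `y ↦ ((b + tB y^{m-1}) / σ)^{[1/(m-1)]}` below it is a positive solution, and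
comparing the largest ratio `y_i / x_i` of two positive solutions gives uniqueness.
-/

open Finset Filter Topology

lemma exists_pos_of_mem_stdSimplex {ι : Type*} [Fintype ι] {z : ι → ℝ}
    (hz : z ∈ stdSimplex ℝ ι) : ∃ q, 0 < z q := by
  obtain ⟨q, -, hq⟩ := exists_lt_of_sum_lt (s := univ) (f := 0) (g := z) (by simp [hz.2])
  exact ⟨q, hq⟩

lemma exists_gt_forall_mul_lt {ι : Type*} [Finite ι] {a v : ι → ℝ} {ρ : ℝ}
    (h : ∀ i, ρ * a i < v i) : ∃ ρ' > ρ, ∀ i, ρ' * a i < v i := by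
  have hnhds : ∀ᶠ r in 𝓝 ρ, ∀ i, r * a i < v i := eventually_all.2 fun i =>
    ((continuous_mul_const (a i)).tendsto ρ).eventually (eventually_lt_nhds (h i))
  obtain ⟨ρ', hρ', hgt⟩ := ((hnhds.filter_mono nhdsWithin_le_nhds).and
    (self_mem_nhdsWithin (s := Set.Ioi ρ))).exists
  exact ⟨ρ', hgt, hρ'⟩

abbrev RTensor (n k : ℕ) : Type := Fin n → (Fin (k + 1) → Fin n) → ℝ

namespace RTensor

variable {n k : ℕ}

section Tvec

variable {B : RTensor n k}

lemma tvec_nonneg (hB : NonnegT n k B) {x : Fin n → ℝ} (hx : 0 ≤ x) : 0 ≤ tvec n k B x :=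
  fun i => sum_nonneg fun g _ => mul_nonneg (hB i g) (prod_nonneg fun _ _ => hx _)

lemma tvec_mono (hB : NonnegT n k B) {x y : Fin n → ℝ} (hx : 0 ≤ x) (hxy : x ≤ y) :
    tvec n k B x ≤ tvec n k B y :=
  fun i => sum_le_sum fun g _ =>
    mul_le_mul_of_nonneg_left (prod_le_prod (fun _ _ => hx _) fun _ _ => hxy _) (hB i g)

lemma tvec_lt_tvec (hB : ∀ i g, 0 < B i g) {x y : Fin n → ℝ} (hx : 0 ≤ x) (hxy : x ≤ y)
    {p : Fin n} (hp : x p < y p) (i : Fin n) : tvec n k B x i < tvec n k B y i := by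
  have hterm : ∀ g, B i g * ∏ j, x (g j) ≤ B i g * ∏ j, y (g j) := fun g =>
    mul_le_mul_of_nonneg_left (prod_le_prod (fun _ _ => hx _) fun _ _ => hxy _) (hB i g).le
  refine sum_lt_sum (fun g _ => hterm g) ⟨fun _ => p, mem_univ _, ?_⟩
  simp only [prod_const, card_univ, Fintype.card_fin]
  exact mul_lt_mul_of_pos_left (pow_lt_pow_left₀ hp (hx p) k.succ_ne_zero) (hB i _)

lemma tvec_smul (c : ℝ) (x : Fin n → ℝ) : tvec n k B (c • x) = c ^ (k + 1) • tvec n k B x := by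
  ext i
  simp only [tvec, Pi.smul_apply, smul_eq_mul, prod_mul_distrib, prod_const, card_univ,
    Fintype.card_fin, mul_sum]
  exact sum_congr rfl fun g _ => by ring

lemma tvec_idT (x : Fin n → ℝ) (i : Fin n) : tvec n k (idT n k) x i = x i ^ (k + 1) := by
  rw [tvec, sum_eq_single (fun _ => i)]
  · simp [idT]
  · intro g _ hg
    simp [idT, show ¬ ∀ j, g j = i from fun h => hg (funext h)]
  · simp

lemma tvec_linear_comb (P Q : RTensor n k) (a c : ℝ) (x : Fin n → ℝ) (i : Fin n) :
    tvec n k (fun i g => a * P i g + c * Q i g) x i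
      = a * tvec n k P x i + c * tvec n k Q x i := by
  simp only [tvec, mul_sum, ← sum_add_distrib]
  exact sum_congr rfl fun g _ => by ring

lemma tvec_const_mul (c : ℝ) (x : Fin n → ℝ) (i : Fin n) :
    tvec n k (fun i g => c * B i g) x i = c * tvec n k B x i := by
  simp only [tvec, mul_sum, mul_assoc]

lemma tvec_homotopy (s t : ℝ) (x : Fin n → ℝ) (i : Fin n) :
    tvec n k (fun i g => t * (s * idT n k i g - B i g) + (1 - t) * idT n k i g) x i
      = (1 + t * (s - 1)) * x i ^ (k + 1) - t * tvec n k B x i := by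
  rw [show (fun i g => t * (s * idT n k i g - B i g) + (1 - t) * idT n k i g)
      = fun i g => (1 + t * (s - 1)) * idT n k i g + (-t) * B i g by ext; ring,
    tvec_linear_comb, tvec_idT]
  ring

lemma tvec_add_const {z : Fin n → ℝ} (hz : z ∈ stdSimplex ℝ (Fin n)) (c : ℝ) (i : Fin n) :
    tvec n k (fun i g => B i g + c) z i = tvec n k B z i + c := by
  have hsum : ∑ g : Fin (k + 1) → Fin n, ∏ j, z (g j) = 1 := by
    rw [← Fintype.piFinset_univ, ← prod_univ_sum, hz.2, prod_const_one]
  simp only [tvec, add_mul, sum_add_distrib, ← mul_sum, hsum, mul_one]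

lemma tvec_zero : tvec n k B 0 = 0 := by
  ext i
  simp [tvec]

@[fun_prop]
lemma continuous_tvec (B : RTensor n k) : Continuous (tvec n k B) := by
  unfold tvec
  fun_prop

end Tvec

section SpectralRadius

variable {B : RTensor n k}

lemma norm_le_of_isEig {lam : ℂ} (h : IsEig n k B lam) : ‖lam‖ ≤ ∑ i, ∑ g, |B i g| := by
  obtain ⟨x, hx0, hx⟩ := h
  obtain ⟨j, hj⟩ := Function.ne_iff.1 hx0
  obtain ⟨i₀, -, hi₀⟩ := exists_max_image univ (fun i => ‖x i‖) ⟨j, mem_univ j⟩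
  have hxi₀ : 0 < ‖x i₀‖ := (norm_pos_iff.2 hj).trans_le (hi₀ j (mem_univ j))
  have hrow : ‖lam‖ * ‖x i₀‖ ^ (k + 1) ≤ (∑ g, |B i₀ g|) * ‖x i₀‖ ^ (k + 1) := by
    rw [← norm_pow, ← norm_mul, ← hx i₀, sum_mul]
    refine (norm_sum_le _ _).trans (sum_le_sum fun g _ => ?_)
    rw [norm_mul, Complex.norm_real, Real.norm_eq_abs, norm_prod]
    refine mul_le_mul_of_nonneg_left ?_ (abs_nonneg _)
    simpa using prod_le_prod (s := univ) (fun j _ => norm_nonneg (x (g j)))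
      fun j _ => hi₀ (g j) (mem_univ _)
  calc ‖lam‖ ≤ ∑ g, |B i₀ g| := le_of_mul_le_mul_right hrow (pow_pos hxi₀ _)
    _ ≤ ∑ i, ∑ g, |B i g| :=
      single_le_sum (f := fun i => ∑ g, |B i g|) (fun i _ => sum_nonneg fun g _ => abs_nonneg _)
        (mem_univ i₀)

lemma le_specRad_of_eigenpair {z : Fin n → ℝ} {ρ : ℝ} (hρ : 0 ≤ ρ) (hz : z ≠ 0)
    (h : ∀ i, tvec n k B z i = ρ * z i ^ (k + 1)) : ρ ≤ specRad n k B := by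
  have hEig : IsEig n k B ρ := by
    refine ⟨fun i => (z i : ℂ), fun h0 => hz (funext fun i => by simpa using congrFun h0 i),
      fun i => ?_⟩
    have := congrArg Complex.ofReal (h i)
    push_cast [tvec] at this
    exact this
  refine le_csSup ⟨∑ i, ∑ g, |B i g|, ?_⟩ ⟨ρ, hEig, ?_⟩
  · rintro r ⟨lam, hlam, rfl⟩
    exact norm_le_of_isEig hlam
  · rw [Complex.norm_real, Real.norm_of_nonneg hρ]

end SpectralRadius

section CollatzWielandt

variable {B : RTensor n k}

lemma le_sum_of_mul_pow_le_tvec (hB : NonnegT n k B) {z : Fin n → ℝ}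
    (hz : z ∈ stdSimplex ℝ (Fin n)) {lam : ℝ} (h : ∀ i, lam * z i ^ (k + 1) ≤ tvec n k B z i) :
    lam ≤ ∑ i, ∑ g, B i g := by
  obtain ⟨q, hq⟩ := exists_pos_of_mem_stdSimplex hz
  obtain ⟨i₀, -, hi₀⟩ := exists_max_image univ z ⟨q, mem_univ q⟩
  have hrow : lam * z i₀ ^ (k + 1) ≤ (∑ g, B i₀ g) * z i₀ ^ (k + 1) := by
    refine (h i₀).trans ?_
    rw [tvec, sum_mul]
    refine sum_le_sum fun g _ => mul_le_mul_of_nonneg_left ?_ (hB i₀ g)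
    simpa using prod_le_prod (s := univ) (fun j _ => hz.1 (g j)) fun j _ => hi₀ (g j) (mem_univ _)
  calc lam ≤ ∑ g, B i₀ g :=
        le_of_mul_le_mul_right hrow (pow_pos (hq.trans_le (hi₀ q (mem_univ q))) _)
    _ ≤ ∑ i, ∑ g, B i g :=
      single_le_sum (f := fun i => ∑ g, B i g) (fun i _ => sum_nonneg fun g _ => hB i g)
        (mem_univ i₀)

/-- `ρ` is a lower Collatz–Wielandt bound at `z` when `ρ z^{[m-1]} ≤ B z^{m-1}`. -/
lemma exists_max_lowerBound [NeZero n] (hB : NonnegT n k B) :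
    ∃ ρ ≥ 0, ∃ z ∈ stdSimplex ℝ (Fin n), (∀ i, ρ * z i ^ (k + 1) ≤ tvec n k B z i) ∧
      ∀ lam, ∀ w ∈ stdSimplex ℝ (Fin n), (∀ i, lam * w i ^ (k + 1) ≤ tvec n k B w i) →
        lam ≤ ρ := by
  set R := ∑ i, ∑ g, B i g
  set K := (Set.Icc 0 R ×ˢ stdSimplex ℝ (Fin n)) ∩
    {p : ℝ × (Fin n → ℝ) | ∀ i, p.1 * p.2 i ^ (k + 1) ≤ tvec n k B p.2 i}
  have hK : IsCompact K := by
    refine (isCompact_Icc.prod (isCompact_stdSimplex ℝ (Fin n))).inter_right ?_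
    simp only [Set.ofPred_forall]
    exact isClosed_iInter fun i => isClosed_le (by fun_prop) (by fun_prop)
  have hvertex := single_mem_stdSimplex ℝ (0 : Fin n)
  have hK₀ : ((0 : ℝ), Pi.single (0 : Fin n) (1 : ℝ)) ∈ K :=
    ⟨⟨⟨le_rfl, le_sum_of_mul_pow_le_tvec hB hvertex
      fun i => by simpa using tvec_nonneg hB hvertex.1 i⟩, hvertex⟩,
      fun i => by simpa using tvec_nonneg hB hvertex.1 i⟩
  obtain ⟨⟨ρ, z⟩, ⟨⟨hρ, hz⟩, hsub⟩, hmax⟩ :=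
    hK.exists_isMaxOn ⟨_, hK₀⟩ continuous_fst.continuousOn
  refine ⟨ρ, hρ.1, z, hz, hsub, fun lam w hw hlam => ?_⟩
  rcases lt_or_ge lam 0 with hneg | hnonneg
  · exact hneg.le.trans hρ.1
  · exact hmax (a := (lam, w))
      ⟨⟨⟨hnonneg, le_sum_of_mul_pow_le_tvec hB hw hlam⟩, hw⟩, hlam⟩

lemma exists_mem_stdSimplex_of_lowerBound {w : Fin n → ℝ} (hw : 0 ≤ w)
    (hsum : 0 < ∑ i, w i) {lam : ℝ} (h : ∀ i, lam * w i ^ (k + 1) ≤ tvec n k B w i) :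
    ∃ w' ∈ stdSimplex ℝ (Fin n), ∀ i, lam * w' i ^ (k + 1) ≤ tvec n k B w' i := by
  set c := (∑ i, w i)⁻¹
  have hc : 0 ≤ c := inv_nonneg.2 hsum.le
  refine ⟨c • w, ⟨fun i => mul_nonneg hc (hw i), ?_⟩, fun i => ?_⟩
  · simp only [Pi.smul_apply, smul_eq_mul, ← mul_sum, c, inv_mul_cancel₀ hsum.ne']
  · rw [tvec_smul, Pi.smul_apply, Pi.smul_apply, smul_eq_mul, smul_eq_mul, mul_pow,
      mul_left_comm]
    exact mul_le_mul_of_nonneg_left (h i) (pow_nonneg hc _)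

/-- The improved vector is `(B z^{m-1})^{[1/(m-1)]}`; positivity of `B` makes the gain strict in
every coordinate. -/
lemma exists_gt_lowerBound (hB : ∀ i g, 0 < B i g) {z : Fin n → ℝ}
    (hz : z ∈ stdSimplex ℝ (Fin n)) {ρ : ℝ} (hρ : 0 ≤ ρ)
    (hsub : ∀ i, ρ * z i ^ (k + 1) ≤ tvec n k B z i) {p : Fin n}
    (hp : ρ * z p ^ (k + 1) < tvec n k B z p) :
    ∃ ρ' > ρ, ∃ w ∈ stdSimplex ℝ (Fin n), ∀ i, ρ' * w i ^ (k + 1) ≤ tvec n k B w i := by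
  have hk : k + 1 ≠ 0 := k.succ_ne_zero
  have hBz : 0 ≤ tvec n k B z := tvec_nonneg (fun i g => (hB i g).le) hz.1
  set y : Fin n → ℝ := fun i => tvec n k B z i ^ ((↑(k + 1) : ℝ)⁻¹)
  set c := ρ ^ ((↑(k + 1) : ℝ)⁻¹)
  have hy : ∀ i, y i ^ (k + 1) = tvec n k B z i := fun i => Real.rpow_inv_natCast_pow (hBz i) hk
  have hc : c ^ (k + 1) = ρ := Real.rpow_inv_natCast_pow hρ hk
  have hcz : 0 ≤ c • z := smul_nonneg (Real.rpow_nonneg hρ _) hz.1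
  have hy₀ : 0 ≤ y := fun i => Real.rpow_nonneg (hBz i) _
  have hpow : ∀ i, (c • z) i ^ (k + 1) = ρ * z i ^ (k + 1) := fun i => by
    rw [Pi.smul_apply, smul_eq_mul, mul_pow, hc]
  have hle : c • z ≤ y := fun i =>
    (pow_le_pow_iff_left₀ (hcz i) (hy₀ i) hk).1 (by rw [hpow, hy]; exact hsub i)
  have hlt : (c • z) p < y p :=
    (pow_lt_pow_iff_left₀ (hcz p) (hy₀ p) hk).1 (by rw [hpow, hy]; exact hp)
  have hstrict : ∀ i, ρ * y i ^ (k + 1) < tvec n k B y i := fun i => by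
    calc ρ * y i ^ (k + 1) = tvec n k B (c • z) i := by
          rw [hy, tvec_smul, Pi.smul_apply, smul_eq_mul, hc]
      _ < tvec n k B y i := tvec_lt_tvec hB hcz hle hlt i
  obtain ⟨ρ', hρ', hρ'y⟩ := exists_gt_forall_mul_lt hstrict
  have hsum : 0 < ∑ i, y i :=
    ((hcz p).trans_lt hlt).trans_le (single_le_sum (fun i _ => hy₀ i) (mem_univ p))
  obtain ⟨w, hw, hw'⟩ := exists_mem_stdSimplex_of_lowerBound hy₀ hsum fun i => (hρ'y i).le
  exact ⟨ρ', hρ', w, hw, hw'⟩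

lemma exists_pos_eigenpair_of_pos [NeZero n] (hB : ∀ i g, 0 < B i g) :
    ∃ ρ ≥ 0, ∃ z ∈ stdSimplex ℝ (Fin n), (∀ i, 0 < z i) ∧
      ∀ i, tvec n k B z i = ρ * z i ^ (k + 1) := by
  obtain ⟨ρ, hρ, z, hz, hsub, hmax⟩ := exists_max_lowerBound (B := B) fun i g => (hB i g).le
  have heig : ∀ i, tvec n k B z i = ρ * z i ^ (k + 1) := by
    by_contra! hne
    obtain ⟨p, hp⟩ := hne
    obtain ⟨ρ', hρ', w, hw, hw'⟩ :=
      exists_gt_lowerBound hB hz hρ hsub ((hsub p).lt_of_ne hp.symm)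
    exact (hmax ρ' w hw hw').not_gt hρ'
  refine ⟨ρ, hρ, z, hz, fun i => ?_, heig⟩
  obtain ⟨q, hq⟩ := exists_pos_of_mem_stdSimplex hz
  have hpos : 0 < ρ * z i ^ (k + 1) := by
    simpa [heig, tvec_zero] using tvec_lt_tvec hB le_rfl hz.1 hq i
  exact (hz.1 i).lt_of_ne fun h => by simp [← h] at hpos

end CollatzWielandt

section Semipositive

variable {B : RTensor n k}

lemma exists_eigenpair_add_const [NeZero n] (hB : NonnegT n k B) {ε : ℝ} (hε : 0 < ε)
    (hε₁ : ε ≤ 1) :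
    ∃ ρ ∈ Set.Icc 0 (∑ i, ∑ g, (B i g + 1)), ∃ z ∈ stdSimplex ℝ (Fin n), (∀ i, 0 < z i) ∧
      ∀ i, ρ * z i ^ (k + 1) = tvec n k B z i + ε := by
  obtain ⟨ρ, hρ, z, hz, hzpos, heig⟩ :=
    exists_pos_eigenpair_of_pos (B := fun i g => B i g + ε) fun i g => by linarith [hB i g]
  refine ⟨ρ, ⟨hρ, ?_⟩, z, hz, hzpos, fun i => by rw [← heig, tvec_add_const hz]⟩
  calc ρ ≤ ∑ i, ∑ g, (B i g + ε) :=
        le_sum_of_mul_pow_le_tvec (fun i g => by linarith [hB i g]) hz fun i => (heig i).ge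
    _ ≤ ∑ i, ∑ g, (B i g + 1) := by gcongr

/-- The eigenpairs of the positive perturbations `B + ε` accumulate, as `ε → 0`, at an
eigenpair of `B`, whose eigenvalue is at most `ρ(B) < s`. -/
lemma exists_pos_tvec_le_of_specRad_lt [NeZero n] (hB : NonnegT n k B) {s : ℝ}
    (hs : specRad n k B < s) :
    ∃ ρ ≥ 0, ρ < s ∧ ∃ z : Fin n → ℝ, (∀ i, 0 < z i) ∧
      ∀ i, tvec n k B z i ≤ ρ * z i ^ (k + 1) := by
  have hε : ∀ j : ℕ, (0 : ℝ) < 1 / (j + 1) := fun j => by positivity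
  have hε₁ : ∀ j : ℕ, 1 / ((j : ℝ) + 1) ≤ 1 := fun j =>
    div_le_one_of_le₀ (by linarith [j.cast_nonneg (α := ℝ)]) (by positivity)
  choose ρs hρmem zs hzs hzpos heig using fun j => exists_eigenpair_add_const hB (hε j) (hε₁ j)
  obtain ⟨⟨ρ, z⟩, ⟨hρ, hz⟩, φ, hφ, hlim⟩ :=
    (isCompact_Icc.prod (isCompact_stdSimplex ℝ (Fin n))).tendsto_subseq
      (x := fun j => (ρs j, zs j)) fun j => ⟨hρmem j, hzs j⟩
  have hρz : ∀ i, tvec n k B z i = ρ * z i ^ (k + 1) := by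
    intro i
    have hF : Continuous fun p : ℝ × (Fin n → ℝ) => p.1 * p.2 i ^ (k + 1) - tvec n k B p.2 i := by
      fun_prop
    have hto : Tendsto (fun j => ρs (φ j) * zs (φ j) i ^ (k + 1) - tvec n k B (zs (φ j)) i)
        atTop (𝓝 0) := by
      simp only [heig, add_sub_cancel_left]
      exact tendsto_one_div_add_atTop_nhds_zero_nat.comp hφ.tendsto_atTop
    linarith [tendsto_nhds_unique ((hF.tendsto _).comp hlim) hto]
  have hρlt : ρ < s := (le_specRad_of_eigenpair hρ.1
    (fun h0 => by simpa [h0] using hz.2) hρz).trans_lt hs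
  obtain ⟨j, hj⟩ := ((continuous_fst.tendsto _).comp hlim |>.eventually_lt_const hρlt).exists
  refine ⟨ρs (φ j), (hρmem (φ j)).1, hj, zs (φ j), hzpos (φ j), fun i => ?_⟩
  linarith [heig (φ j) i, hε (φ j)]

end Semipositive

section Equation

variable {C : RTensor n k} {σ : ℝ} {b : Fin n → ℝ}

lemma le_of_subsolution_of_supersolution (hC : NonnegT n k C) (hb : ∀ i, 0 < b i)
    {x y : Fin n → ℝ} (hx : ∀ i, 0 < x i) (hy : ∀ i, 0 < y i)
    (hsuper : ∀ i, b i + tvec n k C x i ≤ σ * x i ^ (k + 1))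
    (hsub : ∀ i, σ * y i ^ (k + 1) ≤ b i + tvec n k C y i) : y ≤ x := by
  intro i₁
  obtain ⟨i₀, -, hi₀⟩ := exists_max_image univ (fun i => y i / x i) ⟨i₁, mem_univ i₁⟩
  set τ := y i₀ / x i₀
  have hyτx : y ≤ τ • x := fun i => by
    simpa [div_le_iff₀ (hx i)] using hi₀ i (mem_univ i)
  have hyi₀ : y i₀ = τ * x i₀ := (div_mul_cancel₀ _ (hx i₀).ne').symm
  have hτ : τ ≤ 1 := by
    by_contra! hτ
    have hCy : tvec n k C y i₀ ≤ τ ^ (k + 1) * tvec n k C x i₀ := by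
      simpa [tvec_smul] using tvec_mono hC (fun i => (hy i).le) hyτx i₀
    have hτpow : 1 < τ ^ (k + 1) := one_lt_pow₀ hτ k.succ_ne_zero
    have := hsub i₀
    rw [hyi₀, mul_pow] at this
    nlinarith [hsuper i₀, hb i₀]
  calc y i₁ ≤ τ * x i₁ := hyτx i₁
    _ ≤ x i₁ := mul_le_of_le_one_left (hx i₁).le hτ

/-- The solution is the least fixed point (Knaster–Tarski) of the monotone map
`y ↦ ((b + C y^{m-1}) / σ)^{[1/(m-1)]}` on the order interval `[0, w]`. -/
lemma exists_pos_solution_of_supersolution (hC : NonnegT n k C) (hσ : 0 < σ)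
    (hb : ∀ i, 0 < b i) {w : Fin n → ℝ} (hw : 0 ≤ w)
    (hsuper : ∀ i, b i + tvec n k C w i ≤ σ * w i ^ (k + 1)) :
    ∃ x : Fin n → ℝ, (∀ i, 0 < x i) ∧ ∀ i, σ * x i ^ (k + 1) = b i + tvec n k C x i := by
  have hk : k + 1 ≠ 0 := k.succ_ne_zero
  set F : (Fin n → ℝ) → Fin n → ℝ :=
    fun y i => ((b i + tvec n k C y i) / σ) ^ ((↑(k + 1) : ℝ)⁻¹)
  have hbase : ∀ {y}, 0 ≤ y → ∀ i, 0 < (b i + tvec n k C y i) / σ := fun hy i =>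
    div_pos (add_pos_of_pos_of_nonneg (hb i) (tvec_nonneg hC hy i)) hσ
  have hFpos : ∀ {y}, 0 ≤ y → ∀ i, 0 < F y i := fun hy i => Real.rpow_pos_of_pos (hbase hy i) _
  have hFmono : ∀ {u v}, 0 ≤ u → u ≤ v → F u ≤ F v := fun hu huv i =>
    Real.rpow_le_rpow (hbase hu i).le
      (div_le_div_of_nonneg_right (by linarith [tvec_mono hC hu huv i]) hσ.le) (by positivity)
  have hFw : F w ≤ w := fun i => by
    calc F w i ≤ (w i ^ (k + 1)) ^ ((↑(k + 1) : ℝ)⁻¹) :=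
          Real.rpow_le_rpow (hbase hw i).le ((div_le_iff₀' hσ).2 (hsuper i)) (by positivity)
      _ = w i := Real.pow_rpow_inv_natCast (hw i) hk
  have : Fact (0 ≤ w) := ⟨hw⟩
  let G : Set.Icc 0 w →o Set.Icc 0 w :=
    ⟨fun y => ⟨F y, fun i => (hFpos y.2.1 i).le, (hFmono y.2.1 y.2.2).trans hFw⟩,
      fun u _ huv => hFmono u.2.1 huv⟩
  set x : Fin n → ℝ := (G.lfp : Fin n → ℝ)
  have hx : F x = x := congrArg Subtype.val G.map_lfp
  have hx₀ : 0 ≤ x := G.lfp.2.1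
  refine ⟨x, fun i => hx ▸ hFpos hx₀ i, fun i => ?_⟩
  rw [← hx, Real.rpow_inv_natCast_pow (hbase hx₀ i).le hk, hx, mul_div_cancel₀ _ hσ.ne']

theorem exists_unique_pos_solution (hC : NonnegT n k C) (hσ : 0 < σ) (hb : ∀ i, 0 < b i)
    {z : Fin n → ℝ} (hz : ∀ i, 0 < z i) (hCz : ∀ i, tvec n k C z i < σ * z i ^ (k + 1)) :
    ∃! x : Fin n → ℝ, (∀ i, 0 < x i) ∧ ∀ i, σ * x i ^ (k + 1) = b i + tvec n k C x i := by
  have hlarge : ∀ᶠ c : ℝ in atTop,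
      0 < c ∧ ∀ i, b i ≤ c ^ (k + 1) * (σ * z i ^ (k + 1) - tvec n k C z i) :=
    (eventually_gt_atTop 0).and <| eventually_all.2 fun i =>
      ((tendsto_pow_atTop k.succ_ne_zero).atTop_mul_const (sub_pos.2 (hCz i))).eventually_ge_atTop _
  obtain ⟨c, hc, hcb⟩ := hlarge.exists
  have hsuper : ∀ i, b i + tvec n k C (c • z) i ≤ σ * (c • z) i ^ (k + 1) := fun i => by
    rw [tvec_smul, Pi.smul_apply, Pi.smul_apply, smul_eq_mul, smul_eq_mul, mul_pow]
    linarith [hcb i]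
  obtain ⟨x, hx, hxeq⟩ := exists_pos_solution_of_supersolution hC hσ hb
    (smul_nonneg hc.le fun i => (hz i).le) hsuper
  refine ⟨x, ⟨hx, hxeq⟩, fun y ⟨hy, hyeq⟩ => le_antisymm ?_ ?_⟩
  · exact le_of_subsolution_of_supersolution hC hb hx hy (fun i => (hxeq i).ge)
      fun i => (hyeq i).le
  · exact le_of_subsolution_of_supersolution hC hb hy hx (fun i => (hyeq i).ge)
      fun i => (hxeq i).le

end Equation

end RTensor

open RTensor in
/-- For a nonsingular M-tensor `A` and positive `b`, there is `τ₀ > 0` such that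
for each `t ∈ [0, 1 + τ₀)` the system `(t A + (1 - t) I) x^{m-1} = b` has a unique positive
solution. -/
theorem homotopy_unique_positive_solution (k n : ℕ) (hn : 1 ≤ n)
    (A : Fin n → (Fin (k + 1) → Fin n) → ℝ) (hA : IsNsMTensor n k A)
    (b : Fin n → ℝ) (hb : ∀ i, 0 < b i) :
    ∃ τ₀ : ℝ, 0 < τ₀ ∧ ∀ t ∈ Set.Ico (0 : ℝ) (1 + τ₀),
      ∃! x : Fin n → ℝ, (∀ i, 0 < x i) ∧
        tvec n k (fun i g => t * A i g + (1 - t) * idT n k i g) x = b := by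
  have : NeZero n := ⟨by omega⟩
  obtain ⟨s, B, hB, hBs, rfl⟩ := hA
  obtain ⟨ρ, hρ, hρs, z, hz, hBz⟩ := exists_pos_tvec_le_of_specRad_lt hB hBs
  refine ⟨s - ρ, sub_pos.2 hρs, fun t ⟨ht₀, ht⟩ => ?_⟩
  set σ := 1 + t * (s - 1)
  set C : RTensor n k := fun i g => t * B i g
  have htρ : t * ρ < σ := by
    rcases le_or_gt 1 (s - ρ) with hd | hd <;> nlinarith
  have hM : ∀ x i, tvec n k (fun i g => t * (s * idT n k i g - B i g) + (1 - t) * idT n k i g)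
      x i = σ * x i ^ (k + 1) - tvec n k C x i := fun x i => by
    rw [tvec_homotopy, tvec_const_mul]
  have hCz : ∀ i, tvec n k C z i < σ * z i ^ (k + 1) := fun i => by
    rw [tvec_const_mul]
    nlinarith [mul_le_mul_of_nonneg_left (hBz i) ht₀, pow_pos (hz i) (k + 1)]
  obtain ⟨x, ⟨hx, hxeq⟩, huniq⟩ := exists_unique_pos_solution (fun i g => mul_nonneg ht₀ (hB i g))
    ((mul_nonneg ht₀ hρ).trans_lt htρ) hb hz hCz
  refine ⟨x, ⟨hx, funext fun i => by rw [hM]; linarith [hxeq i]⟩, fun y ⟨hy, hyeq⟩ =>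
    huniq y ⟨hy, fun i => by linarith [hM y i ▸ congrFun hyeq i]⟩⟩
end

section
/- Let m ≥ 2 and n ≥ 1. Suppose A ∈ ℝ^{[m,n]} is a nonsingular M-tensor and b ∈ ℝⁿ is a positive vector. Then there exists a real number τ₀ > 0 such that for every t ∈ [0, 1+τ₀) and every positive vector x ∈ ℝⁿ satisfying (t A + (1−t) I) x^{m-1} = b, the n×n matrix (m−1)·((t Â + (1−t) I) x^{m-2}) is nonsingular (invertible). -/
/-!
The Jacobian `M = (t Â + (1 - t) I) x^{m-2}` satisfies `M x = (t Â + (1 - t) I) x^{m-1}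
= (t A + (1 - t) I) x^{m-1} = b > 0`, because symmetrizing the trailing indices does not change
`T x^{m-1}`. For `t ≥ 0` the off-diagonal entries of `M` are nonpositive, since those of `A` are.
A matrix with nonpositive off-diagonal entries that maps a positive vector `x` to a positive
vector is nonsingular: `M · diag(x)` is strictly diagonally dominant. Hence any `τ₀ > 0` works.
-/

open Finset Matrix

section ZMatrix

variable {ι : Type*} [Fintype ι] [DecidableEq ι]

theorem Matrix.sum_norm_offDiag_lt_norm_diag_of_offDiag_nonpos {N : Matrix ι ι ℝ}
    (hoff : ∀ i j, i ≠ j → N i j ≤ 0) (hrow : ∀ i, 0 < ∑ j, N i j) (i : ι) :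
    ∑ j ∈ univ.erase i, ‖N i j‖ < ‖N i i‖ := by
  have hnorm : ∑ j ∈ univ.erase i, ‖N i j‖ = -∑ j ∈ univ.erase i, N i j := by
    rw [← sum_neg_distrib]
    refine sum_congr rfl fun j hj => ?_
    rw [Real.norm_eq_abs, abs_of_nonpos (hoff i j (ne_of_mem_erase hj).symm)]
  have hsplit := add_sum_erase univ (N i) (mem_univ i)
  have hrest : 0 ≤ ∑ j ∈ univ.erase i, ‖N i j‖ := sum_nonneg fun j _ => norm_nonneg _
  have hi := hrow i
  rw [hnorm, Real.norm_eq_abs, abs_of_pos (by linarith)]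
  linarith

theorem Matrix.isUnit_of_offDiag_nonpos_of_mulVec_pos {M : Matrix ι ι ℝ} {x : ι → ℝ}
    (hoff : ∀ i j, i ≠ j → M i j ≤ 0) (hx : ∀ i, 0 < x i) (hMx : ∀ i, 0 < (M *ᵥ x) i) :
    IsUnit M := by
  have hdiag : (M * diagonal x).det ≠ 0 := by
    refine det_ne_zero_of_sum_row_lt_diag
      (sum_norm_offDiag_lt_norm_diag_of_offDiag_nonpos (fun i j hij => ?_) fun i => ?_)
    · rw [mul_diagonal]
      exact mul_nonpos_of_nonpos_of_nonneg (hoff i j hij) (hx j).le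
    · simpa only [mul_diagonal, mulVec, dotProduct] using hMx i
  rw [isUnit_iff_isUnit_det, isUnit_iff_ne_zero]
  exact left_ne_zero_of_mul (det_mul M (diagonal x) ▸ hdiag)

end ZMatrix

section Tensor

variable {n k : ℕ}

theorem tmat_mulVec (T : Fin n → (Fin (k + 1) → Fin n) → ℝ) (x : Fin n → ℝ) :
    tmat n k T x *ᵥ x = tvec n k T x := by
  funext i
  simp only [tmat, tvec, mulVec, dotProduct, sum_mul, mul_assoc]
  rw [← Fintype.sum_prod_type', ← (Fin.consEquiv fun _ : Fin (k + 1) => Fin n).sum_comp]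
  refine Fintype.sum_congr _ _ fun p => ?_
  simp only [Fin.consEquiv, Equiv.coe_fn_mk, Fin.prod_univ_succ, Fin.cons_zero, Fin.cons_succ]
  ring

theorem tvec_linearCombination (a c : ℝ) (S T : Fin n → (Fin (k + 1) → Fin n) → ℝ)
    (x : Fin n → ℝ) :
    tvec n k (fun i g => a * S i g + c * T i g) x = a • tvec n k S x + c • tvec n k T x := by
  funext i
  simp only [tvec, Pi.add_apply, Pi.smul_apply, smul_eq_mul, mul_sum, add_mul, mul_assoc,
    sum_add_distrib]

theorem tvec_psym (A : Fin n → (Fin (k + 1) → Fin n) → ℝ) (x : Fin n → ℝ) :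
    tvec n k (psym n k A) x = tvec n k A x := by
  have hperm : ∀ (i : Fin n) (π : Equiv.Perm (Fin (k + 1))),
      ∑ g : Fin (k + 1) → Fin n, A i (g ∘ π) * ∏ j, x (g j) =
        ∑ g : Fin (k + 1) → Fin n, A i g * ∏ j, x (g j) := fun i π =>
    Fintype.sum_equiv (π.symm.arrowCongr (Equiv.refl _)) _ _ fun g => by
      rw [← Equiv.prod_comp π]
      rfl
  funext i
  simp only [tvec, psym, mul_assoc, sum_mul, ← mul_sum]
  rw [sum_comm, sum_congr rfl fun π _ => hperm i π, sum_const, card_univ, Fintype.card_perm,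
    Fintype.card_fin, nsmul_eq_mul, ← mul_assoc, one_div,
    inv_mul_cancel₀ (Nat.cast_ne_zero.2 (Nat.factorial_ne_zero _)), one_mul]

theorem idT_eq_zero {i : Fin n} {g : Fin (k + 1) → Fin n} (h : ∃ j, g j ≠ i) :
    idT n k i g = 0 :=
  if_neg fun hall => h.elim fun j hj => hj (hall j)

def IsZTensor (T : Fin n → (Fin (k + 1) → Fin n) → ℝ) : Prop :=
  ∀ i g, (∃ j, g j ≠ i) → T i g ≤ 0

theorem IsNsMTensor.isZTensor {A : Fin n → (Fin (k + 1) → Fin n) → ℝ}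
    (hA : IsNsMTensor n k A) : IsZTensor A := by
  obtain ⟨s, B, hB, -, rfl⟩ := hA
  intro i g hg
  simp only [idT_eq_zero hg, mul_zero, zero_sub, neg_nonpos]
  exact hB i g

theorem IsZTensor.psym {A : Fin n → (Fin (k + 1) → Fin n) → ℝ} (hA : IsZTensor A) :
    IsZTensor (psym n k A) := by
  intro i g ⟨j, hj⟩
  refine mul_nonpos_of_nonneg_of_nonpos (by positivity) (sum_nonpos fun π _ => hA i _ ?_)
  exact ⟨π.symm j, by simpa using hj⟩

theorem IsZTensor.smul_add_smul_idT {T : Fin n → (Fin (k + 1) → Fin n) → ℝ}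
    (hT : IsZTensor T) {a : ℝ} (ha : 0 ≤ a) (c : ℝ) :
    IsZTensor (fun i g => a * T i g + c * idT n k i g) := by
  intro i g hg
  simp only [idT_eq_zero hg, mul_zero, add_zero]
  exact mul_nonpos_of_nonneg_of_nonpos ha (hT i g hg)

theorem IsZTensor.tmat_nonpos {T : Fin n → (Fin (k + 1) → Fin n) → ℝ} (hT : IsZTensor T)
    {x : Fin n → ℝ} (hx : ∀ i, 0 ≤ x i) {i j : Fin n} (hij : i ≠ j) : tmat n k T x i j ≤ 0 :=
  sum_nonpos fun _ _ => mul_nonpos_of_nonpos_of_nonneg (hT i _ ⟨0, by simpa using hij.symm⟩)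
    (prod_nonneg fun _ _ => hx _)

end Tensor

theorem homotopy_jacobian_invertible_general (k n : ℕ)
    (A : Fin n → (Fin (k + 1) → Fin n) → ℝ) (hA : IsNsMTensor n k A)
    (b : Fin n → ℝ) (hb : ∀ i, 0 < b i) :
    ∃ τ₀ : ℝ, 0 < τ₀ ∧ ∀ t ∈ Set.Ico (0 : ℝ) (1 + τ₀), ∀ x : Fin n → ℝ,
      (∀ i, 0 < x i) →
      tvec n k (fun i g => t * A i g + (1 - t) * idT n k i g) x = b →
      IsUnit (((k : ℝ) + 1) •
        tmat n k (fun i g => t * psym n k A i g + (1 - t) * idT n k i g) x) := by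
  refine ⟨1, one_pos, fun t ht x hx hsol => ?_⟩
  have hZ := hA.isZTensor.psym.smul_add_smul_idT ht.1 (1 - t)
  have hMx : tmat n k (fun i g => t * psym n k A i g + (1 - t) * idT n k i g) x *ᵥ x = b := by
    rw [tmat_mulVec, tvec_linearCombination, tvec_psym, ← tvec_linearCombination, hsol]
  have hM := isUnit_of_offDiag_nonpos_of_mulVec_pos
    (fun i j hij => hZ.tmat_nonpos (fun l => (hx l).le) hij) hx (hMx ▸ hb)
  rw [isUnit_iff_isUnit_det, det_smul]
  exact (isUnit_iff_ne_zero.2 (pow_ne_zero _ (by positivity))).mul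
    ((isUnit_iff_isUnit_det _).1 hM)

/-- For a nonsingular M-tensor `A` and positive `b`, there is `τ₀ > 0` such that
for each `t ∈ [0, 1 + τ₀)` and each positive solution `x` of `(t A + (1 - t) I) x^{m-1} = b`,
the matrix `(m - 1) (t Â + (1 - t) I) x^{m-2}` is invertible. -/
theorem homotopy_jacobian_invertible (k n : ℕ) (hn : 1 ≤ n)
    (A : Fin n → (Fin (k + 1) → Fin n) → ℝ) (hA : IsNsMTensor n k A)
    (b : Fin n → ℝ) (hb : ∀ i, 0 < b i) :
    ∃ τ₀ : ℝ, 0 < τ₀ ∧ ∀ t ∈ Set.Ico (0 : ℝ) (1 + τ₀), ∀ x : Fin n → ℝ,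
      (∀ i, 0 < x i) →
      tvec n k (fun i g => t * A i g + (1 - t) * idT n k i g) x = b →
      IsUnit (((k : ℝ) + 1) •
        tmat n k (fun i g => t * psym n k A i g + (1 - t) * idT n k i g) x) :=
  homotopy_jacobian_invertible_general k n A hA b hb
end

section
/- Let m ≥ 2 and n ≥ 1. Suppose A ∈ ℝ^{[m,n]} is a nonsingular M-tensor and b ∈ ℝⁿ is a positive vector. Then there exist a real number τ₀ > 0 and a map x : ℝ → ℝⁿ that is infinitely differentiable (C^∞) on the interval [0, 1+τ₀), such that for every t ∈ [0, 1+τ₀), the vector x(t) is positive and (t A + (1−t) I) x(t)^{m-1} = b; in other words, the positive solutions of the homotopy equations for t ∈ [0, 1+τ₀) form a smooth curve in the positive orthant ℝⁿ₊₊. -/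
noncomputable section Aux

open Finset

variable {n k : ℕ}

/-- crude row bound -/
def rowB (n k : ℕ) (B : Fin n → (Fin (k + 1) → Fin n) → ℝ) : ℝ :=
  ∑ i, ∑ g : Fin (k + 1) → Fin n, |B i g|

lemma tvec_nonneg {B : Fin n → (Fin (k+1) → Fin n) → ℝ} (hB : NonnegT n k B)
    {x : Fin n → ℝ} (hx : ∀ i, 0 ≤ x i) (i : Fin n) : 0 ≤ tvec n k B x i := by
  refine Finset.sum_nonneg fun g _ => mul_nonneg (hB i g) (Finset.prod_nonneg fun j _ => hx _)

lemma tvec_mono {B : Fin n → (Fin (k+1) → Fin n) → ℝ} (hB : NonnegT n k B)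
    {x y : Fin n → ℝ} (hx : ∀ i, 0 ≤ x i) (hxy : ∀ i, x i ≤ y i) (i : Fin n) :
    tvec n k B x i ≤ tvec n k B y i := by
  refine Finset.sum_le_sum fun g _ => ?_
  refine mul_le_mul_of_nonneg_left ?_ (hB i g)
  exact Finset.prod_le_prod (fun j _ => hx _) (fun j _ => hxy _)

lemma tvec_smul {B : Fin n → (Fin (k+1) → Fin n) → ℝ} (r : ℝ) (x : Fin n → ℝ) (i : Fin n) :
    tvec n k B (fun j => r * x j) i = r ^ (k+1) * tvec n k B x i := by
  unfold tvec
  rw [Finset.mul_sum]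
  refine Finset.sum_congr rfl fun g _ => ?_
  rw [Finset.prod_mul_distrib, Finset.prod_const]
  simp [Finset.card_univ]
  ring

lemma tvec_idT (x : Fin n → ℝ) (i : Fin n) : tvec n k (idT n k) x i = x i ^ (k+1) := by
  unfold tvec idT
  have : ∀ g : Fin (k+1) → Fin n, (∀ j, g j = i) ↔ g = fun _ => i := by
    intro g; constructor
    · intro h; funext j; exact h j
    · intro h j; rw [h]
  rw [Finset.sum_congr rfl (fun g _ => by rw [if_congr (this g) rfl rfl])]
  rw [Finset.sum_eq_single (fun _ => i : Fin (k+1) → Fin n)]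
  · simp
  · intro g _ hg
    rw [if_neg (by simpa using hg), zero_mul]
  · intro h; exact absurd (Finset.mem_univ _) h

lemma tvec_comb (P Q : Fin n → (Fin (k+1) → Fin n) → ℝ) (a c : ℝ) (x : Fin n → ℝ) (i : Fin n) :
    tvec n k (fun i g => a * P i g + c * Q i g) x i = a * tvec n k P x i + c * tvec n k Q x i := by
  unfold tvec
  rw [Finset.mul_sum, Finset.mul_sum, ← Finset.sum_add_distrib]
  exact Finset.sum_congr rfl fun g _ => by ring

lemma tvec_continuous (B : Fin n → (Fin (k+1) → Fin n) → ℝ) (i : Fin n) :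
    Continuous fun x : Fin n → ℝ => tvec n k B x i := by
  refine continuous_finset_sum _ fun g _ => ?_
  exact continuous_const.mul (continuous_finset_prod _ fun j _ => continuous_apply _)

end Aux
section Spec
open Finset
variable {n k : ℕ}

lemma eig_abs_le {B : Fin n → (Fin (k+1) → Fin n) → ℝ} {lam : ℂ}
    (h : IsEig n k B lam) : ‖lam‖ ≤ rowB n k B := by
  obtain ⟨x, hx0, hx⟩ := h
  obtain ⟨i0, -, hi0⟩ := Finset.exists_max_image Finset.univ (fun i => ‖x i‖)
    ⟨⟨0, by
      rcases Nat.eq_zero_or_pos n with h0 | h0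
      · exfalso; apply hx0; funext i; exact absurd i.2 (by omega)
      · exact h0⟩, Finset.mem_univ _⟩
  have hne : ∃ j, x j ≠ 0 := by
    by_contra h
    push_neg at h
    exact hx0 (funext h)
  obtain ⟨j0, hj0⟩ := hne
  have hpos : 0 < ‖x i0‖ :=
    lt_of_lt_of_le (by simpa using hj0) (hi0 j0 (Finset.mem_univ _))
  have key : ‖lam‖ * ‖x i0‖ ^ (k+1) ≤
      rowB n k B * ‖x i0‖ ^ (k+1) := by
    have h1 : ‖lam‖ * ‖x i0‖ ^ (k+1) =
        ‖∑ g : Fin (k+1) → Fin n, (B i0 g : ℂ) * ∏ j, x (g j)‖ := by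
      rw [hx i0, norm_mul, norm_pow]
    rw [h1]
    calc ‖∑ g : Fin (k+1) → Fin n, (B i0 g : ℂ) * ∏ j, x (g j)‖
        ≤ ∑ g : Fin (k+1) → Fin n, ‖(B i0 g : ℂ) * ∏ j, x (g j)‖ := by
          exact norm_sum_le _ _
      _ ≤ ∑ g : Fin (k+1) → Fin n, |B i0 g| * ‖x i0‖ ^ (k+1) := by
          refine Finset.sum_le_sum fun g _ => ?_
          rw [norm_mul, Complex.norm_real, Real.norm_eq_abs, norm_prod]
          refine mul_le_mul_of_nonneg_left ?_ (abs_nonneg _)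
          calc ∏ j, ‖x (g j)‖ ≤ ∏ j : Fin (k+1), ‖x i0‖ :=
                Finset.prod_le_prod (fun j _ => norm_nonneg _)
                  (fun j _ => hi0 (g j) (Finset.mem_univ _))
            _ = ‖x i0‖ ^ (k+1) := by simp
      _ ≤ rowB n k B * ‖x i0‖ ^ (k+1) := by
          rw [← Finset.sum_mul]
          refine mul_le_mul_of_nonneg_right ?_ (by positivity)
          exact Finset.single_le_sum (f := fun i => ∑ g : Fin (k+1) → Fin n, |B i g|)
            (fun i _ => Finset.sum_nonneg fun g _ => abs_nonneg _) (Finset.mem_univ i0)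
  exact le_of_mul_le_mul_right key (by positivity)

lemma abs_le_specRad {B : Fin n → (Fin (k+1) → Fin n) → ℝ} {lam : ℂ}
    (h : IsEig n k B lam) : ‖lam‖ ≤ specRad n k B := by
  apply le_csSup
  · refine ⟨rowB n k B, ?_⟩
    rintro r ⟨mu, hmu, rfl⟩
    exact eig_abs_le hmu
  · exact ⟨lam, h, rfl⟩

end Spec
section Perron
open Finset
variable {n k : ℕ}

lemma sub_bound {P : Fin n → (Fin (k+1) → Fin n) → ℝ} (hP : NonnegT n k P)
    {ν : ℝ} {u : Fin n → ℝ} (hu0 : ∀ i, 0 ≤ u i) (hu1 : ∑ i, u i = 1)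
    (hsub : ∀ i, ν * u i ^ (k+1) ≤ tvec n k P u i) : ν ≤ rowB n k P := by
  have hne : Nonempty (Fin n) := by
    rcases Nat.eq_zero_or_pos n with h0 | h0
    · exfalso; subst h0; simp at hu1
    · exact ⟨⟨0, h0⟩⟩
  obtain ⟨i0, -, hi0⟩ := Finset.exists_max_image Finset.univ u ⟨hne.some, Finset.mem_univ _⟩
  have hpos : 0 < u i0 := by
    by_contra hc
    push_neg at hc
    have : ∀ i, u i = 0 := fun i => le_antisymm (le_trans (hi0 i (Finset.mem_univ _)) hc) (hu0 i)
    rw [Finset.sum_congr rfl (fun i _ => this i)] at hu1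
    simp at hu1
  have h1 : tvec n k P u i0 ≤ (∑ g : Fin (k+1) → Fin n, P i0 g) * u i0 ^ (k+1) := by
    rw [Finset.sum_mul]
    refine Finset.sum_le_sum fun g _ => mul_le_mul_of_nonneg_left ?_ (hP i0 g)
    calc ∏ j, u (g j) ≤ ∏ j : Fin (k+1), u i0 :=
          Finset.prod_le_prod (fun j _ => hu0 _) (fun j _ => hi0 (g j) (Finset.mem_univ _))
      _ = u i0 ^ (k+1) := by simp
  have h2 : (∑ g : Fin (k+1) → Fin n, P i0 g) ≤ rowB n k P := by
    calc (∑ g : Fin (k+1) → Fin n, P i0 g) ≤ ∑ g : Fin (k+1) → Fin n, |P i0 g| :=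
          Finset.sum_le_sum fun g _ => le_abs_self _
      _ ≤ rowB n k P := Finset.single_le_sum
          (f := fun i => ∑ g : Fin (k+1) → Fin n, |P i g|)
          (fun i _ => Finset.sum_nonneg fun g _ => abs_nonneg _) (Finset.mem_univ i0)
  have := le_trans (hsub i0) (le_trans h1 (mul_le_mul_of_nonneg_right h2 (by positivity)))
  exact le_of_mul_le_mul_right this (by positivity)

lemma perron_pos (hn : 1 ≤ n) (P : Fin n → (Fin (k+1) → Fin n) → ℝ)
    (hP : ∀ i g, 0 < P i g) :
    ∃ (ν : ℝ) (u : Fin n → ℝ), 0 ≤ ν ∧ (∀ i, 0 < u i) ∧ (∑ i, u i = 1) ∧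
      ∀ i, tvec n k P u i = ν * u i ^ (k+1) := by
  have hne : Nonempty (Fin n) := ⟨⟨0, hn⟩⟩
  have hgne : Nonempty (Fin (k+1) → Fin n) := ⟨fun _ => hne.some⟩
  have hPnn : NonnegT n k P := fun i g => le_of_lt (hP i g)
  set K := rowB n k P with hK
  have hK0 : 0 ≤ K := Finset.sum_nonneg fun i _ => Finset.sum_nonneg fun g _ => abs_nonneg _
  set Abig : Set (ℝ × (Fin n → ℝ)) :=
    {p | 0 ≤ p.1 ∧ p.1 ≤ K ∧ (∀ i, 0 ≤ p.2 i) ∧ (∑ i, p.2 i) = 1 ∧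
      ∀ i, p.1 * p.2 i ^ (k+1) ≤ tvec n k P p.2 i} with hAbig
  -- A is compact
  have hclosed : IsClosed Abig := by
    rw [hAbig]
    apply IsClosed.inter
    · exact isClosed_le continuous_const continuous_fst
    apply IsClosed.inter
    · exact isClosed_le continuous_fst continuous_const
    apply IsClosed.inter
    · have : {p : ℝ × (Fin n → ℝ) | ∀ i, 0 ≤ p.2 i}
          = ⋂ i, {p : ℝ × (Fin n → ℝ) | 0 ≤ p.2 i} := Set.setOf_forall _
      show IsClosed {p : ℝ × (Fin n → ℝ) | ∀ i, 0 ≤ p.2 i}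
      rw [this]
      exact isClosed_iInter fun i =>
        isClosed_le continuous_const ((continuous_apply i).comp continuous_snd)
    apply IsClosed.inter
    · exact isClosed_eq
        (continuous_finset_sum _ fun i _ => (continuous_apply i).comp continuous_snd)
        continuous_const
    · have : {p : ℝ × (Fin n → ℝ) | ∀ i, p.1 * p.2 i ^ (k+1) ≤ tvec n k P p.2 i}
          = ⋂ i, {p : ℝ × (Fin n → ℝ) | p.1 * p.2 i ^ (k+1) ≤ tvec n k P p.2 i} :=
        Set.setOf_forall _
      show IsClosed {p : ℝ × (Fin n → ℝ) | ∀ i, p.1 * p.2 i ^ (k+1) ≤ tvec n k P p.2 i}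
      rw [this]
      exact isClosed_iInter fun i => isClosed_le
        (continuous_fst.mul (((continuous_apply i).comp continuous_snd).pow _))
        ((tvec_continuous P i).comp continuous_snd)
  have hsubbox : Abig ⊆ (Set.Icc (0:ℝ) K) ×ˢ (Set.Icc (0 : Fin n → ℝ) 1) := by
    rintro ⟨ν, u⟩ ⟨h1, h2, h3, h4, -⟩
    refine ⟨⟨h1, h2⟩, ?_, ?_⟩
    · intro i; exact h3 i
    · intro i
      calc u i ≤ ∑ j, u j := Finset.single_le_sum (fun j _ => h3 j) (Finset.mem_univ i)
        _ = 1 := h4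
  have hcompact : IsCompact Abig :=
    IsCompact.of_isClosed_subset (IsCompact.prod isCompact_Icc isCompact_Icc) hclosed hsubbox
  have hAne : Abig.Nonempty := by
    refine ⟨(0, fun _ => (n:ℝ)⁻¹), le_refl 0, hK0, fun i => by positivity, ?_, fun i => ?_⟩
    · show ∑ _i : Fin n, (n:ℝ)⁻¹ = 1
      rw [Finset.sum_const, Finset.card_univ, Fintype.card_fin, nsmul_eq_mul]
      have hn0 : (n:ℝ) ≠ 0 := Nat.cast_ne_zero.mpr (by omega)
      field_simp
    · rw [zero_mul]
      exact tvec_nonneg hPnn (fun i => by positivity) i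
  set E := Prod.fst '' Abig with hE
  have hEcomp : IsCompact E := hcompact.image continuous_fst
  have hEne : E.Nonempty := hAne.image _
  have hsup_mem : sSup E ∈ E := hEcomp.sSup_mem hEne
  obtain ⟨p, hmemA, hfst⟩ := hsup_mem
  obtain ⟨ν, u⟩ := p
  obtain ⟨hν0, hνK, hu0, husum, hsub⟩ := hmemA
  dsimp only at hν0 hνK hu0 husum hsub hfst
  have hνsup : ∀ r ∈ E, r ≤ ν := by
    rw [hfst]; exact fun r hr => le_csSup hEcomp.bddAbove hr
  -- basic facts
  have hu1 : ∀ i, u i ≤ 1 := by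
    intro i
    calc u i ≤ ∑ j, u j := Finset.single_le_sum (fun j _ => hu0 j) (Finset.mem_univ i)
      _ = 1 := husum
  have husome : ∃ j, 0 < u j := by
    by_contra hc
    push_neg at hc
    have : ∀ i, u i = 0 := fun i => le_antisymm (hc i) (hu0 i)
    rw [Finset.sum_congr rfl (fun i _ => this i)] at husum
    simp at husum
  obtain ⟨j0, hj0⟩ := husome
  have htvpos : ∀ i, 0 < tvec n k P u i := by
    intro i
    have hterm : 0 < P i (fun _ => j0) * ∏ j : Fin (k+1), u j0 := by
      have : (0:ℝ) < ∏ j : Fin (k+1), u j0 := Finset.prod_pos fun j _ => hj0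
      exact mul_pos (hP _ _) this
    calc (0:ℝ) < P i (fun _ => j0) * ∏ j : Fin (k+1), u j0 := hterm
      _ = P i (fun _ => j0) * ∏ j : Fin (k+1), u ((fun _ => j0) j) := rfl
      _ ≤ tvec n k P u i := Finset.single_le_sum
          (f := fun g : Fin (k+1) → Fin n => P i g * ∏ j, u (g j))
          (fun g _ => mul_nonneg (hPnn i g) (Finset.prod_nonneg fun j _ => hu0 _))
          (Finset.mem_univ _)
  have hCpos : 0 < K := by
    have h1 : (0:ℝ) < ∑ g : Fin (k+1) → Fin n, |P hne.some g| := by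
      apply Finset.sum_pos (fun g _ => abs_pos.mpr (ne_of_gt (hP _ _))) Finset.univ_nonempty
    calc (0:ℝ) < ∑ g : Fin (k+1) → Fin n, |P hne.some g| := h1
      _ ≤ K := Finset.single_le_sum (f := fun i => ∑ g : Fin (k+1) → Fin n, |P i g|)
          (fun i _ => Finset.sum_nonneg fun g _ => abs_nonneg _) (Finset.mem_univ _)
  have htvle : ∀ i, tvec n k P u i ≤ K := by
    intro i
    calc tvec n k P u i ≤ ∑ g : Fin (k+1) → Fin n, P i g := by
          refine Finset.sum_le_sum fun g _ => ?_
          have : ∏ j, u (g j) ≤ 1 := Finset.prod_le_one (fun j _ => hu0 _) (fun j _ => hu1 _)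
          calc P i g * ∏ j, u (g j) ≤ P i g * 1 := mul_le_mul_of_nonneg_left this (hPnn i g)
            _ = P i g := mul_one _
      _ ≤ K := by
          calc (∑ g : Fin (k+1) → Fin n, P i g) ≤ ∑ g : Fin (k+1) → Fin n, |P i g| :=
                Finset.sum_le_sum fun g _ => le_abs_self _
            _ ≤ K := Finset.single_le_sum
                (f := fun i => ∑ g : Fin (k+1) → Fin n, |P i g|)
                (fun i _ => Finset.sum_nonneg fun g _ => abs_nonneg _) (Finset.mem_univ i)
  -- main equality claim
  have heq : ∀ i, tvec n k P u i = ν * u i ^ (k+1) := by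
    by_contra hc
    push_neg at hc
    obtain ⟨i0, hi0ne⟩ := hc
    have hstrict : ν * u i0 ^ (k+1) < tvec n k P u i0 := lt_of_le_of_ne (hsub i0) (Ne.symm hi0ne)
    -- improvement vector
    set v : Fin n → ℝ := fun i => (tvec n k P u i) ^ (((k+1 : ℕ) : ℝ))⁻¹ with hv
    have hvpos : ∀ i, 0 < v i := fun i => Real.rpow_pos_of_pos (htvpos i) _
    have hvpow : ∀ i, v i ^ (k+1) = tvec n k P u i := fun i =>
      Real.rpow_inv_natCast_pow (le_of_lt (htvpos i)) (Nat.succ_ne_zero k)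
    have hβ : ∀ j, ν * u j ^ (k+1) ≤ v j ^ (k+1) := fun j => by rw [hvpow]; exact hsub j
    set β : ℝ := ν ^ (((k+1 : ℕ) : ℝ))⁻¹ with hβdef
    have hβpow : β ^ (k+1) = ν := Real.rpow_inv_natCast_pow hν0 (Nat.succ_ne_zero k)
    have hβ0 : 0 ≤ β := Real.rpow_nonneg hν0 _
    have hβu : ∀ j, β * u j ≤ v j := by
      intro j
      have h1 : (β * u j) ^ (k+1) ≤ v j ^ (k+1) := by
        rw [mul_pow, hβpow]; exact hβ j
      exact (pow_le_pow_iff_left₀ (mul_nonneg hβ0 (hu0 j)) (le_of_lt (hvpos j))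
        (Nat.succ_ne_zero k)).mp h1
    have hprod : ∀ g : Fin (k+1) → Fin n, ν * ∏ j, u (g j) ≤ ∏ j, v (g j) := by
      intro g
      calc ν * ∏ j, u (g j) = ∏ j, (β * u (g j)) := by
            rw [Finset.prod_mul_distrib, Finset.prod_const]
            simp [Finset.card_univ, hβpow]
        _ ≤ ∏ j, v (g j) := Finset.prod_le_prod
            (fun j _ => mul_nonneg hβ0 (hu0 _)) (fun j _ => hβu _)
    set δ : Fin n → ℝ := fun i => P i (fun _ => i0) * (tvec n k P u i0 - ν * u i0 ^ (k+1))
      with hδdef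
    have hδpos : ∀ i, 0 < δ i := fun i => mul_pos (hP _ _) (by linarith [hstrict])
    have key1 : ∀ i, ν * tvec n k P u i + δ i ≤ tvec n k P v i := by
      intro i
      set g0 : Fin (k+1) → Fin n := fun _ => i0 with hg0
      have hsplit : ∀ w : Fin n → ℝ, tvec n k P w i
          = P i g0 * ∏ j, w (g0 j) + ∑ g ∈ Finset.univ.erase g0, P i g * ∏ j, w (g j) := by
        intro w
        rw [Finset.add_sum_erase _ (fun g : Fin (k+1) → Fin n => P i g * ∏ j, w (g j))
          (Finset.mem_univ g0)]
        rfl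
      have hlhs : ν * tvec n k P u i = P i g0 * (ν * ∏ j, u (g0 j))
          + ∑ g ∈ Finset.univ.erase g0, P i g * (ν * ∏ j, u (g j)) := by
        rw [hsplit u, mul_add, Finset.mul_sum]
        congr 1
        · ring
        · exact Finset.sum_congr rfl fun g _ => by ring
      rw [hsplit v, hlhs]
      have hterm0 : P i g0 * (ν * ∏ j, u (g0 j)) + δ i = P i g0 * ∏ j, v (g0 j) := by
        have h1 : ∏ j : Fin (k+1), u (g0 j) = u i0 ^ (k+1) := by
          simp [hg0, Finset.card_univ]
        have h2 : ∏ j : Fin (k+1), v (g0 j) = tvec n k P u i0 := by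
          have : ∏ j : Fin (k+1), v (g0 j) = v i0 ^ (k+1) := by
            simp [hg0, Finset.card_univ]
          rw [this, hvpow]
        rw [h1, h2, hδdef]
        ring
      have hterms : ∑ g ∈ Finset.univ.erase g0, P i g * (ν * ∏ j, u (g j))
          ≤ ∑ g ∈ Finset.univ.erase g0, P i g * ∏ j, v (g j) :=
        Finset.sum_le_sum fun g _ => mul_le_mul_of_nonneg_left (hprod g) (hPnn i g)
      linarith [hterm0, hterms]
    -- uniform improvement
    obtain ⟨imin, -, himin⟩ := Finset.exists_min_image Finset.univ δ ⟨hne.some, Finset.mem_univ _⟩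
    set ε : ℝ := δ imin / K with hεdef
    have hεpos : 0 < ε := div_pos (hδpos imin) hCpos
    have key2 : ∀ i, (ν + ε) * v i ^ (k+1) ≤ tvec n k P v i := by
      intro i
      have h1 : ε * v i ^ (k+1) ≤ δ imin := by
        rw [hvpow]
        calc ε * tvec n k P u i ≤ ε * K :=
              mul_le_mul_of_nonneg_left (htvle i) (le_of_lt hεpos)
          _ = δ imin := by rw [hεdef, div_mul_cancel₀ _ (ne_of_gt hCpos)]
      calc (ν + ε) * v i ^ (k+1) = ν * v i ^ (k+1) + ε * v i ^ (k+1) := by ring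
        _ ≤ ν * tvec n k P u i + δ imin := by
            rw [hvpow] at h1 ⊢
            exact add_le_add_right h1 _
        _ ≤ ν * tvec n k P u i + δ i := add_le_add_right (himin i (Finset.mem_univ i)) _
        _ ≤ tvec n k P v i := key1 i
    -- normalize
    set σ : ℝ := ∑ j, v j with hσdef
    have hσpos : 0 < σ := Finset.sum_pos (fun j _ => hvpos j) Finset.univ_nonempty
    set w : Fin n → ℝ := fun j => σ⁻¹ * v j with hwdef
    have hw0 : ∀ j, 0 ≤ w j := fun j => mul_nonneg (by positivity) (le_of_lt (hvpos j))
    have hwsum : ∑ j, w j = 1 := by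
      rw [hwdef]
      rw [← Finset.mul_sum]
      exact inv_mul_cancel₀ (ne_of_gt hσpos)
    have hwsub : ∀ i, (ν + ε) * w i ^ (k+1) ≤ tvec n k P w i := by
      intro i
      have := tvec_smul (B := P) σ⁻¹ v i
      rw [hwdef, this]
      have h1 : (ν + ε) * (σ⁻¹ * v i) ^ (k+1) = (σ⁻¹)^(k+1) * ((ν+ε) * v i ^ (k+1)) := by ring
      rw [h1]
      exact mul_le_mul_of_nonneg_left (key2 i) (by positivity)
    have hbound : ν + ε ≤ K := sub_bound hPnn hw0 hwsum hwsub
    have hmem : ν + ε ∈ E := ⟨(ν + ε, w), ⟨by positivity, hbound, hw0, hwsum, hwsub⟩, rfl⟩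
    have : ν + ε ≤ ν := hνsup _ hmem
    linarith
  -- positivity of u
  have hupos : ∀ i, 0 < u i := by
    intro i
    rcases lt_or_eq_of_le (hu0 i) with h | h
    · exact h
    · exfalso
      have := heq i
      rw [← h, zero_pow (Nat.succ_ne_zero k), mul_zero] at this
      exact absurd this (ne_of_gt (htvpos i))
  exact ⟨ν, u, hν0, hupos, husum, heq⟩

end Perron
section KeyLemma
open Finset Filter Topology
variable {n k : ℕ}

lemma tvec_addconst (B : Fin n → (Fin (k+1) → Fin n) → ℝ) (c : ℝ) (x : Fin n → ℝ) (i : Fin n) :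
    tvec n k (fun i g => B i g + c) x i = tvec n k B x i + c * (∑ j, x j) ^ (k+1) := by
  have hkey : ∑ g : Fin (k+1) → Fin n, ∏ j, x (g j) = (∑ j, x j) ^ (k+1) := by
    rw [← Fintype.piFinset_univ, ← Finset.prod_univ_sum]
    simp [Finset.prod_const, Finset.card_univ]
  unfold tvec
  rw [Finset.sum_congr rfl (fun g _ => add_mul (B i g) c (∏ j, x (g j))),
    Finset.sum_add_distrib, ← Finset.mul_sum, hkey]

lemma key_subinv (hn : 1 ≤ n) {B : Fin n → (Fin (k+1) → Fin n) → ℝ} (hB : NonnegT n k B)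
    {s : ℝ} (hs : specRad n k B < s) :
    ∃ u : Fin n → ℝ, (∀ i, 0 < u i) ∧ (∑ i, u i = 1) ∧
      ∀ i, tvec n k B u i < s * u i ^ (k+1) := by
  haveI hne : Nonempty (Fin n) := ⟨⟨0, hn⟩⟩
  set K1 := rowB n k (fun i g => B i g + 1) with hK1
  have H : ∀ q : ℕ, ∃ (ν : ℝ) (u : Fin n → ℝ), 0 ≤ ν ∧ (∀ i, 0 < u i) ∧ (∑ i, u i = 1) ∧
      ∀ i, tvec n k (fun i g => B i g + 1/(q+1 : ℝ)) u i = ν * u i ^ (k+1) :=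
    fun q => perron_pos hn _ (fun i g => by have := hB i g; positivity)
  choose ν_ u_ hν0 hupos husum heqP using H
  -- rewrite eigen equations
  have heq : ∀ q i, tvec n k B (u_ q) i + 1/(q+1 : ℝ) = ν_ q * u_ q i ^ (k+1) := by
    intro q i
    have := heqP q i
    rw [tvec_addconst, husum q] at this
    rw [← this]
    ring
  -- bound on ν
  have hνK : ∀ q, ν_ q ≤ K1 := by
    intro q
    have h1 : ν_ q ≤ rowB n k (fun i g => B i g + 1/(q+1 : ℝ)) := by
      apply sub_bound (fun i g => by have := hB i g; positivity) (fun i => le_of_lt (hupos q i)) (husum q)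
      intro i
      rw [heqP q i]
    refine le_trans h1 ?_
    refine Finset.sum_le_sum fun i _ => Finset.sum_le_sum fun g _ => ?_
    have h2 : (0:ℝ) < 1/(q+1 : ℝ) := by positivity
    have h3 : (1:ℝ)/(q+1 : ℝ) ≤ 1 := by
      rw [div_le_one (by positivity)]
      linarith [Nat.cast_nonneg (α := ℝ) q]
    rw [abs_of_nonneg (by have := hB i g; positivity), abs_of_nonneg (show (0:ℝ) ≤ B i g + 1 by linarith [hB i g])]
    linarith [hB i g]
  -- compactness
  have hbox : IsCompact ((Set.Icc (0:ℝ) K1) ×ˢ (Set.Icc (0 : Fin n → ℝ) 1)) :=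
    IsCompact.prod isCompact_Icc isCompact_Icc
  have hmem : ∀ q, ((ν_ q, u_ q) : ℝ × (Fin n → ℝ))
      ∈ (Set.Icc (0:ℝ) K1) ×ˢ (Set.Icc (0 : Fin n → ℝ) 1) := by
    intro q
    refine ⟨⟨hν0 q, hνK q⟩, fun i => le_of_lt (hupos q i), fun i => ?_⟩
    calc u_ q i ≤ ∑ j, u_ q j :=
          Finset.single_le_sum (fun j _ => le_of_lt (hupos q j)) (Finset.mem_univ i)
      _ = 1 := husum q
  obtain ⟨⟨L, ustar⟩, hmemb, φ, hφ, hconv⟩ := hbox.tendsto_subseq hmem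
  have hconv1 : Tendsto (fun j => ν_ (φ j)) atTop (𝓝 L) :=
    (continuous_fst.tendsto _).comp hconv
  have hconv2 : ∀ i, Tendsto (fun j => u_ (φ j) i) atTop (𝓝 (ustar i)) := fun i =>
    ((continuous_apply i).comp continuous_snd |>.tendsto _).comp hconv
  have hq0 : Tendsto (fun j => 1/((φ j : ℝ)+1)) atTop (𝓝 0) := by
    have h1 : Tendsto (fun q : ℕ => 1/((q : ℝ)+1)) atTop (𝓝 0) :=
      tendsto_one_div_add_atTop_nhds_zero_nat
    exact h1.comp hφ.tendsto_atTop
  -- limit equation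
  have hlim : ∀ i, tvec n k B ustar i = L * ustar i ^ (k+1) := by
    intro i
    have hF : Tendsto (fun j => tvec n k B (u_ (φ j)) i + 1/((φ j : ℝ)+1)) atTop
        (𝓝 (tvec n k B ustar i)) := by
      have h1 : Tendsto (fun j => u_ (φ j)) atTop (𝓝 ustar) :=
        (continuous_snd.tendsto _).comp hconv
      have h2 : Tendsto (fun j => tvec n k B (u_ (φ j)) i) atTop (𝓝 (tvec n k B ustar i)) :=
        ((tvec_continuous B i).tendsto _).comp h1
      simpa using h2.add hq0
    have hG : Tendsto (fun j => ν_ (φ j) * u_ (φ j) i ^ (k+1)) atTop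
        (𝓝 (L * ustar i ^ (k+1))) :=
      hconv1.mul ((hconv2 i).pow _)
    have : Tendsto (fun j => tvec n k B (u_ (φ j)) i + 1/((φ j : ℝ)+1)) atTop
        (𝓝 (L * ustar i ^ (k+1))) := by
      refine hG.congr fun j => ?_
      rw [heq (φ j) i]
    exact tendsto_nhds_unique hF this
  have husum' : ∑ i, ustar i = 1 := by
    have h1 : Tendsto (fun j => ∑ i, u_ (φ j) i) atTop (𝓝 (∑ i, ustar i)) :=
      tendsto_finset_sum _ fun i _ => hconv2 i
    have h2 : Tendsto (fun j => ∑ i, u_ (φ j) i) atTop (𝓝 1) := by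
      refine tendsto_const_nhds.congr fun j => ?_
      rw [husum (φ j)]
    exact tendsto_nhds_unique h1 h2
  have hL0 : 0 ≤ L := ge_of_tendsto' hconv1 fun j => hν0 (φ j)
  -- L is an eigenvalue
  have hIsEig : IsEig n k B (L : ℂ) := by
    refine ⟨fun i => (ustar i : ℂ), ?_, ?_⟩
    · intro hzero
      have : ∀ i, ustar i = 0 := by
        intro i
        have := congrFun hzero i
        simpa using this
      rw [Finset.sum_congr rfl (fun i _ => this i)] at husum'
      simp at husum'
    · intro i
      have h := hlim i
      calc ∑ g : Fin (k+1) → Fin n, (B i g : ℂ) * ∏ j, ((ustar (g j) : ℝ) : ℂ)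
          = ((tvec n k B ustar i : ℝ) : ℂ) := by
            unfold tvec; push_cast; rfl
        _ = (L : ℂ) * ((ustar i : ℝ) : ℂ) ^ (k+1) := by
            rw [h]; push_cast; ring
  have hLs : L < s := by
    have h1 : ‖(L : ℂ)‖ ≤ specRad n k B := abs_le_specRad hIsEig
    rw [Complex.norm_real, Real.norm_eq_abs, abs_of_nonneg hL0] at h1
    linarith
  -- pick large q
  have hev : ∀ᶠ j in atTop, ν_ (φ j) < s := hconv1.eventually_lt_const hLs
  obtain ⟨j, hj⟩ := hev.exists
  refine ⟨u_ (φ j), hupos _, husum _, fun i => ?_⟩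
  have h1 := heq (φ j) i
  have h2 : 0 < u_ (φ j) i ^ (k+1) := pow_pos (hupos _ i) _
  have h3 : ν_ (φ j) * u_ (φ j) i ^ (k+1) ≤ s * u_ (φ j) i ^ (k+1) :=
    mul_le_mul_of_nonneg_right (le_of_lt hj) (le_of_lt h2)
  have h4 : (0:ℝ) < 1/((φ j : ℝ)+1) := by positivity
  nlinarith [h1, h3, h4, mul_lt_mul_of_pos_right hj h2]

end KeyLemma
section ExistUnique
open Finset
variable {n k : ℕ}

lemma exists_pos_solution {B : Fin n → (Fin (k+1) → Fin n) → ℝ}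
    (hB : NonnegT n k B) {b : Fin n → ℝ} (hb : ∀ i, 0 < b i)
    {t c : ℝ} (ht : 0 ≤ t) (hc : 0 < c)
    {w : Fin n → ℝ} (hw0 : ∀ i, 0 ≤ w i)
    (hsup : ∀ i, b i + t * tvec n k B w i ≤ c * w i ^ (k+1)) :
    ∃ x : Fin n → ℝ, (∀ i, 0 < x i) ∧ ∀ i, c * x i ^ (k+1) = b i + t * tvec n k B x i := by
  set S : Set (Fin n → ℝ) := {x | (∀ i, 0 ≤ x i) ∧ (∀ i, x i ≤ w i) ∧
    ∀ i, c * x i ^ (k+1) ≤ b i + t * tvec n k B x i} with hS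
  have hzero_tvec : ∀ i, tvec n k B (fun _ => (0:ℝ)) i = 0 := by
    intro i
    unfold tvec
    refine Finset.sum_eq_zero fun g _ => ?_
    rw [Finset.prod_const]
    simp
  have h0S : (fun _ => (0:ℝ)) ∈ S := by
    refine ⟨fun i => le_refl 0, fun i => hw0 i, fun i => ?_⟩
    rw [hzero_tvec i, zero_pow (Nat.succ_ne_zero k), mul_zero, mul_zero, add_zero]
    exact le_of_lt (hb i)
  have hSne : S.Nonempty := ⟨_, h0S⟩
  have hbdd : ∀ i, BddAbove ((fun x : Fin n → ℝ => x i) '' S) := by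
    intro i
    refine ⟨w i, ?_⟩
    rintro r ⟨x, hx, rfl⟩
    exact hx.2.1 i
  set xs : Fin n → ℝ := fun i => sSup ((fun x : Fin n → ℝ => x i) '' S) with hxs
  have hle : ∀ x ∈ S, ∀ i, x i ≤ xs i := fun x hx i =>
    le_csSup (hbdd i) ⟨x, hx, rfl⟩
  have hxs0 : ∀ i, 0 ≤ xs i := fun i => hle _ h0S i
  have hxsub : ∀ x ∈ S, ∀ i, c * x i ^ (k+1) ≤ b i + t * tvec n k B xs i := by
    intro x hx i
    refine le_trans (hx.2.2 i) (add_le_add_right ?_ _)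
    refine mul_le_mul_of_nonneg_left ?_ ht
    exact tvec_mono hB hx.1 (hle x hx) i
  have hnum_pos : ∀ i, 0 < (b i + t * tvec n k B xs i)/c := by
    intro i
    have h1 : 0 ≤ t * tvec n k B xs i := mul_nonneg ht (tvec_nonneg hB hxs0 i)
    have := hb i
    positivity
  set y : Fin n → ℝ := fun i => ((b i + t * tvec n k B xs i)/c) ^ (((k+1 : ℕ) : ℝ))⁻¹ with hy
  have hypos : ∀ i, 0 < y i := fun i => Real.rpow_pos_of_pos (hnum_pos i) _
  have hypow : ∀ i, y i ^ (k+1) = (b i + t * tvec n k B xs i)/c := fun i =>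
    Real.rpow_inv_natCast_pow (le_of_lt (hnum_pos i)) (Nat.succ_ne_zero k)
  have hxsw : ∀ i, xs i ≤ w i := by
    intro i
    refine csSup_le (hSne.image _) ?_
    rintro r ⟨x, hx, rfl⟩
    exact hx.2.1 i
  have hxy : ∀ i, xs i ≤ y i := by
    intro i
    refine csSup_le ((hSne.image _)) ?_
    rintro r ⟨x, hx, rfl⟩
    have h1 : x i ^ (k+1) ≤ y i ^ (k+1) := by
      rw [hypow, le_div_iff₀ hc]
      calc x i ^ (k+1) * c = c * x i ^ (k+1) := mul_comm _ _
        _ ≤ b i + t * tvec n k B xs i := hxsub x hx i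
    exact (pow_le_pow_iff_left₀ (hx.1 i) (le_of_lt (hypos i)) (Nat.succ_ne_zero k)).mp h1
  have hyw : ∀ i, y i ≤ w i := by
    intro i
    have h1 : y i ^ (k+1) ≤ w i ^ (k+1) := by
      rw [hypow, div_le_iff₀ hc]
      calc b i + t * tvec n k B xs i ≤ b i + t * tvec n k B w i := by
            refine add_le_add_right (mul_le_mul_of_nonneg_left ?_ ht) _
            exact tvec_mono hB hxs0 hxsw i
        _ ≤ c * w i ^ (k+1) := hsup i
        _ = w i ^ (k+1) * c := mul_comm _ _
    exact (pow_le_pow_iff_left₀ (le_of_lt (hypos i)) (hw0 i) (Nat.succ_ne_zero k)).mp h1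
  have hyS : y ∈ S := by
    refine ⟨fun i => le_of_lt (hypos i), hyw, fun i => ?_⟩
    have h1 : c * y i ^ (k+1) = b i + t * tvec n k B xs i := by
      rw [hypow]
      field_simp
    rw [h1]
    refine add_le_add_right (mul_le_mul_of_nonneg_left ?_ ht) _
    exact tvec_mono hB hxs0 hxy i
  have heqxy : ∀ i, xs i = y i := fun i => le_antisymm (hxy i) (hle y hyS i)
  refine ⟨xs, fun i => ?_, fun i => ?_⟩
  · rw [heqxy i]; exact hypos i
  · have h1 : c * y i ^ (k+1) = b i + t * tvec n k B xs i := by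
      rw [hypow]
      field_simp
    rw [heqxy i, h1]

lemma unique_pos_aux {B : Fin n → (Fin (k+1) → Fin n) → ℝ}
    (hB : NonnegT n k B) {b : Fin n → ℝ} (hb : ∀ i, 0 < b i)
    {t c : ℝ} (ht : 0 ≤ t) (hc : 0 < c)
    {x y : Fin n → ℝ} (hx0 : ∀ i, 0 < x i) (hy0 : ∀ i, 0 < y i)
    (hx : ∀ i, c * x i ^ (k+1) = b i + t * tvec n k B x i)
    (hy : ∀ i, c * y i ^ (k+1) = b i + t * tvec n k B y i) :
    ∀ i, y i ≤ x i := by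
  intro i
  haveI hne : Nonempty (Fin n) := ⟨i⟩
  obtain ⟨i0, -, hi0⟩ := Finset.exists_max_image Finset.univ (fun i => y i / x i)
    ⟨i, Finset.mem_univ _⟩
  set r : ℝ := y i0 / x i0 with hr
  have hrpos : 0 < r := div_pos (hy0 i0) (hx0 i0)
  have hyrx : ∀ j, y j ≤ r * x j := by
    intro j
    have := hi0 j (Finset.mem_univ j)
    rw [div_le_iff₀ (hx0 j)] at this
    exact this
  have hyi0 : y i0 = r * x i0 := by
    rw [hr, div_mul_cancel₀ _ (ne_of_gt (hx0 i0))]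
  have htv : tvec n k B y i0 ≤ r ^ (k+1) * tvec n k B x i0 := by
    have h1 : tvec n k B y i0 ≤ tvec n k B (fun j => r * x j) i0 :=
      tvec_mono hB (fun j => le_of_lt (hy0 j)) hyrx i0
    rw [tvec_smul] at h1
    exact h1
  have hrle : r ≤ 1 := by
    have e1 : c * y i0 ^ (k+1) ≤ b i0 + t * (r ^ (k+1) * tvec n k B x i0) := by
      rw [hy i0]
      refine add_le_add_right ?_ _
      exact mul_le_mul_of_nonneg_left htv ht
    have e2 : t * tvec n k B x i0 = c * x i0 ^ (k+1) - b i0 := by linarith [hx i0]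
    have e3 : c * (r * x i0) ^ (k+1) ≤ b i0 + r ^ (k+1) * (c * x i0 ^ (k+1) - b i0) := by
      rw [← hyi0, ← e2]
      calc c * y i0 ^ (k+1) ≤ b i0 + t * (r ^ (k+1) * tvec n k B x i0) := e1
        _ = b i0 + r ^ (k+1) * (t * tvec n k B x i0) := by ring
    have e4 : (1 - r ^ (k+1)) * b i0 ≥ 0 := by
      rw [mul_pow] at e3
      nlinarith [e3]
    have e5 : r ^ (k+1) ≤ 1 := by nlinarith [e4, hb i0]
    exact (pow_le_one_iff_of_nonneg (le_of_lt hrpos) (Nat.succ_ne_zero k)).mp e5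
  calc y i ≤ r * x i := hyrx i
    _ ≤ 1 * x i := mul_le_mul_of_nonneg_right hrle (le_of_lt (hx0 i))
    _ = x i := one_mul _

lemma unique_pos_solution {B : Fin n → (Fin (k+1) → Fin n) → ℝ}
    (hB : NonnegT n k B) {b : Fin n → ℝ} (hb : ∀ i, 0 < b i)
    {t c : ℝ} (ht : 0 ≤ t) (hc : 0 < c)
    {x y : Fin n → ℝ} (hx0 : ∀ i, 0 < x i) (hy0 : ∀ i, 0 < y i)
    (hx : ∀ i, c * x i ^ (k+1) = b i + t * tvec n k B x i)
    (hy : ∀ i, c * y i ^ (k+1) = b i + t * tvec n k B y i) :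
    x = y := by
  funext i
  exact le_antisymm (unique_pos_aux hB hb ht hc hy0 hx0 hy hx i)
    (unique_pos_aux hB hb ht hc hx0 hy0 hx hy i)

end ExistUnique
noncomputable section Smooth
open Finset Topology Filter

variable {n k : ℕ}

/-- the homotopy map, as a function of `(t, x)` jointly -/
def Fmap (n k : ℕ) (A : Fin n → (Fin (k+1) → Fin n) → ℝ) : ℝ × (Fin n → ℝ) → (Fin n → ℝ) :=
  fun p i => ∑ g : Fin (k+1) → Fin n, (p.1 * A i g + (1 - p.1) * idT n k i g) * ∏ j, p.2 (g j)

lemma Fmap_eq_tvec (A : Fin n → (Fin (k+1) → Fin n) → ℝ) (t : ℝ) (x : Fin n → ℝ) :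
    Fmap n k A (t, x) = tvec n k (fun i g => t * A i g + (1 - t) * idT n k i g) x := rfl

lemma contDiff_prod_coords (g : Fin (k+1) → Fin n) :
    ContDiff ℝ (⊤ : WithTop ℕ∞) (fun p : ℝ × (Fin n → ℝ) => ∏ j, p.2 (g j)) := by
  have h : ∀ (s : Finset (Fin (k+1))),
      ContDiff ℝ (⊤ : WithTop ℕ∞) (fun p : ℝ × (Fin n → ℝ) => ∏ j ∈ s, p.2 (g j)) := by
    intro s
    induction s using Finset.cons_induction with
    | empty => simpa using contDiff_const
    | cons a s ha ih =>
      have h1 : ContDiff ℝ (⊤ : WithTop ℕ∞) (fun p : ℝ × (Fin n → ℝ) => p.2 (g a)) :=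
        ((ContinuousLinearMap.proj (g a)).comp
          (ContinuousLinearMap.snd ℝ ℝ (Fin n → ℝ))).contDiff
      simpa only [Finset.prod_cons] using h1.mul ih
  exact h Finset.univ

lemma contDiff_Fmap (A : Fin n → (Fin (k+1) → Fin n) → ℝ) :
    ContDiff ℝ (⊤ : WithTop ℕ∞) (Fmap n k A) := by
  apply contDiff_pi.mpr
  intro i
  apply ContDiff.sum
  intro g _
  refine ContDiff.mul ?_ (contDiff_prod_coords g)
  exact (contDiff_fst.mul contDiff_const).add ((contDiff_const.sub contDiff_fst).mul contDiff_const)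

/-- the candidate derivative of `Fmap` at `p₀` -/
def DFmap (n k : ℕ) (A : Fin n → (Fin (k+1) → Fin n) → ℝ) (p₀ : ℝ × (Fin n → ℝ)) :
    (ℝ × (Fin n → ℝ)) →L[ℝ] (Fin n → ℝ) :=
  ContinuousLinearMap.pi fun i =>
    ∑ g : Fin (k+1) → Fin n,
      ((p₀.1 * A i g + (1 - p₀.1) * idT n k i g) •
          (∑ j : Fin (k+1), (∏ l ∈ Finset.univ.erase j, p₀.2 (g l)) •
            ((ContinuousLinearMap.proj (g j)).comp (ContinuousLinearMap.snd ℝ ℝ (Fin n → ℝ))))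
        + (∏ j, p₀.2 (g j)) •
            ((A i g - idT n k i g) • ContinuousLinearMap.fst ℝ ℝ (Fin n → ℝ)))

lemma hasFDerivAt_Fmap (A : Fin n → (Fin (k+1) → Fin n) → ℝ) (p₀ : ℝ × (Fin n → ℝ)) :
    HasFDerivAt (Fmap n k A) (DFmap n k A p₀) p₀ := by
  apply hasFDerivAt_pi.mpr
  intro i
  apply HasFDerivAt.fun_sum
  intro g _
  have hc : HasFDerivAt (fun p : ℝ × (Fin n → ℝ) => p.1 * A i g + (1 - p.1) * idT n k i g)
      ((A i g - idT n k i g) • ContinuousLinearMap.fst ℝ ℝ (Fin n → ℝ)) p₀ := by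
    have h1 : (fun p : ℝ × (Fin n → ℝ) => p.1 * A i g + (1 - p.1) * idT n k i g)
        = fun p => (A i g - idT n k i g) * p.1 + idT n k i g := by
      funext p; ring
    rw [h1]
    have h2 : HasFDerivAt (fun p : ℝ × (Fin n → ℝ) => p.1)
        (ContinuousLinearMap.fst ℝ ℝ (Fin n → ℝ)) p₀ := hasFDerivAt_fst
    simpa using (h2.const_mul (A i g - idT n k i g)).add_const (idT n k i g)
  have hd : HasFDerivAt (fun p : ℝ × (Fin n → ℝ) => ∏ j, p.2 (g j))
      (∑ j : Fin (k+1), (∏ l ∈ Finset.univ.erase j, p₀.2 (g l)) •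
        ((ContinuousLinearMap.proj (g j)).comp (ContinuousLinearMap.snd ℝ ℝ (Fin n → ℝ)))) p₀ := by
    exact HasFDerivAt.finset_prod fun j _ =>
      ((ContinuousLinearMap.proj (g j)).comp
        (ContinuousLinearMap.snd ℝ ℝ (Fin n → ℝ))).hasFDerivAt
  exact hc.mul hd

lemma DFmap_apply (A : Fin n → (Fin (k+1) → Fin n) → ℝ) (p₀ : ℝ × (Fin n → ℝ))
    (q : ℝ × (Fin n → ℝ)) (i : Fin n) :
    DFmap n k A p₀ q i =
      ∑ g : Fin (k+1) → Fin n,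
        ((p₀.1 * A i g + (1 - p₀.1) * idT n k i g) *
            (∑ j : Fin (k+1), (∏ l ∈ Finset.univ.erase j, p₀.2 (g l)) * q.2 (g j))
          + (∏ j, p₀.2 (g j)) * ((A i g - idT n k i g) * q.1)) := by
  unfold DFmap
  simp [ContinuousLinearMap.pi_apply, ContinuousLinearMap.sum_apply,
    ContinuousLinearMap.add_apply, ContinuousLinearMap.smul_apply,
    ContinuousLinearMap.comp_apply, ContinuousLinearMap.proj_apply,
    ContinuousLinearMap.coe_fst', ContinuousLinearMap.coe_snd', smul_eq_mul]

end Smooth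
section Inj
open Finset

variable {n k : ℕ}

lemma inj_lemma {B : Fin n → (Fin (k+1) → Fin n) → ℝ} (hB : NonnegT n k B)
    {b x₀ : Fin n → ℝ} (hb : ∀ i, 0 < b i) (hx₀ : ∀ i, 0 < x₀ i)
    {t₀ c : ℝ} (ht₀ : 0 ≤ t₀) (hc : 0 < c)
    (hsol : ∀ i, c * x₀ i ^ (k+1) = b i + t₀ * tvec n k B x₀ i)
    {v : Fin n → ℝ}
    (hv : ∀ i, ∑ g : Fin (k+1) → Fin n, (c * idT n k i g - t₀ * B i g) *
      (∑ j : Fin (k+1), (∏ l ∈ Finset.univ.erase j, x₀ (g l)) * v (g j)) = 0) :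
    v = 0 := by
  set W : (Fin (k+1) → Fin n) → ℝ :=
    fun g => ∑ j : Fin (k+1), (∏ l ∈ Finset.univ.erase j, x₀ (g l)) * v (g j) with hW
  -- the idT part picks out the constant index
  have hidT : ∀ i, ∑ g : Fin (k+1) → Fin n, idT n k i g * W g
      = ((k:ℝ)+1) * (x₀ i ^ k * v i) := by
    intro i
    have hcongr : ∀ g : Fin (k+1) → Fin n,
        idT n k i g * W g = (if g = (fun _ => i) then (1:ℝ) else 0) * W g := by
      intro g
      unfold idT
      congr 1
      refine if_congr ?_ rfl rfl
      constructor
      · intro h; funext j; exact h j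
      · intro h j; rw [h]
    rw [Finset.sum_congr rfl (fun g _ => hcongr g)]
    rw [Finset.sum_eq_single (fun _ => i : Fin (k+1) → Fin n)]
    · rw [if_pos rfl, one_mul]
      have hWconst : W (fun _ => i) = ((k:ℝ)+1) * (x₀ i ^ k * v i) := by
        show (∑ j : Fin (k+1), (∏ l ∈ Finset.univ.erase j, x₀ ((fun _ => i) l))
          * v ((fun _ => i) j)) = ((k:ℝ)+1) * (x₀ i ^ k * v i)
        have hterm : ∀ j : Fin (k+1),
            (∏ l ∈ Finset.univ.erase j, x₀ ((fun _ => i) l)) * v ((fun _ => i) j)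
              = x₀ i ^ k * v i := by
          intro j
          have h1 : (∏ l ∈ Finset.univ.erase j, x₀ i) = x₀ i ^ k := by
            rw [Finset.prod_const, Finset.card_erase_of_mem (Finset.mem_univ j),
              Finset.card_univ, Fintype.card_fin]
            rfl
          simpa using congrArg (· * v i) h1
        rw [Finset.sum_congr rfl (fun j _ => hterm j), Finset.sum_const, Finset.card_univ,
          Fintype.card_fin, nsmul_eq_mul]
        push_cast
        ring
      rw [hWconst]
    · intro g _ hg
      rw [if_neg hg, zero_mul]
    · intro h; exact absurd (Finset.mem_univ _) h
  -- split the equation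
  have heqn : ∀ i, c * (((k:ℝ)+1) * (x₀ i ^ k * v i))
      = t₀ * ∑ g : Fin (k+1) → Fin n, B i g * W g := by
    intro i
    have h1 := hv i
    rw [Finset.sum_congr rfl (fun g _ => sub_mul (c * idT n k i g) (t₀ * B i g) (W g))] at h1
    rw [Finset.sum_sub_distrib] at h1
    have h2 : ∑ g : Fin (k+1) → Fin n, c * idT n k i g * W g
        = c * ∑ g : Fin (k+1) → Fin n, idT n k i g * W g := by
      rw [Finset.mul_sum]
      exact Finset.sum_congr rfl fun g _ => by ring
    have h3 : ∑ g : Fin (k+1) → Fin n, t₀ * B i g * W g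
        = t₀ * ∑ g : Fin (k+1) → Fin n, B i g * W g := by
      rw [Finset.mul_sum]
      exact Finset.sum_congr rfl fun g _ => by ring
    rw [h2, h3, hidT i] at h1
    linarith
  -- max ratio
  rcases Nat.eq_zero_or_pos n with hn0 | hn0
  · subst hn0
    funext i
    exact i.elim0
  haveI : Nonempty (Fin n) := ⟨⟨0, hn0⟩⟩
  obtain ⟨p0, -, hp0⟩ := Finset.exists_max_image Finset.univ (fun p => |v p| / x₀ p)
    ⟨Classical.arbitrary _, Finset.mem_univ _⟩
  set r : ℝ := |v p0| / x₀ p0 with hr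
  have hr0 : 0 ≤ r := div_nonneg (abs_nonneg _) (le_of_lt (hx₀ p0))
  have hvr : ∀ q, |v q| ≤ r * x₀ q := by
    intro q
    have := hp0 q (Finset.mem_univ q)
    rw [div_le_iff₀ (hx₀ q)] at this
    linarith [this]
  have hWbound : ∀ g : Fin (k+1) → Fin n, |W g| ≤ r * (((k:ℝ)+1) * ∏ j, x₀ (g j)) := by
    intro g
    have h1 : |W g| ≤ ∑ j : Fin (k+1), (∏ l ∈ Finset.univ.erase j, x₀ (g l)) * |v (g j)| := by
      refine le_trans (Finset.abs_sum_le_sum_abs _ _) (Finset.sum_le_sum fun j _ => ?_)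
      rw [abs_mul, abs_of_nonneg (Finset.prod_nonneg fun l _ => le_of_lt (hx₀ _))]
    have h2 : ∑ j : Fin (k+1), (∏ l ∈ Finset.univ.erase j, x₀ (g l)) * |v (g j)|
        ≤ ∑ j : Fin (k+1), (∏ l ∈ Finset.univ.erase j, x₀ (g l)) * (r * x₀ (g j)) := by
      refine Finset.sum_le_sum fun j _ => ?_
      exact mul_le_mul_of_nonneg_left (hvr (g j))
        (Finset.prod_nonneg fun l _ => le_of_lt (hx₀ _))
    have h3 : ∑ j : Fin (k+1), (∏ l ∈ Finset.univ.erase j, x₀ (g l)) * (r * x₀ (g j))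
        = r * (((k:ℝ)+1) * ∏ j, x₀ (g j)) := by
      have hterm : ∀ j : Fin (k+1), (∏ l ∈ Finset.univ.erase j, x₀ (g l)) * (r * x₀ (g j))
          = r * ∏ l, x₀ (g l) := by
        intro j
        rw [← Finset.mul_prod_erase Finset.univ (fun l => x₀ (g l)) (Finset.mem_univ j)]
        ring
      rw [Finset.sum_congr rfl (fun j _ => hterm j), Finset.sum_const, Finset.card_univ,
        Fintype.card_fin, nsmul_eq_mul]
      push_cast
      ring
    linarith [h1, h2, le_of_eq h3]
  have hMbound : ∀ i, |∑ g : Fin (k+1) → Fin n, B i g * W g|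
      ≤ r * (((k:ℝ)+1) * tvec n k B x₀ i) := by
    intro i
    refine le_trans (Finset.abs_sum_le_sum_abs _ _) ?_
    have h1 : ∀ g : Fin (k+1) → Fin n, |B i g * W g|
        ≤ B i g * (r * (((k:ℝ)+1) * ∏ j, x₀ (g j))) := by
      intro g
      rw [abs_mul, abs_of_nonneg (hB i g)]
      exact mul_le_mul_of_nonneg_left (hWbound g) (hB i g)
    refine le_trans (Finset.sum_le_sum fun g _ => h1 g) ?_
    unfold tvec
    rw [Finset.mul_sum, Finset.mul_sum]
    exact le_of_eq (Finset.sum_congr rfl fun g _ => by ring)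
  -- conclude r ≤ 0
  have hrle : r ≤ 0 := by
    have h1 := heqn p0
    have h2 : c * (((k:ℝ)+1) * (x₀ p0 ^ k * |v p0|)) ≤ t₀ * (r * (((k:ℝ)+1) * tvec n k B x₀ p0)) := by
      have habs : |c * (((k:ℝ)+1) * (x₀ p0 ^ k * v p0))|
          = c * (((k:ℝ)+1) * (x₀ p0 ^ k * |v p0|)) := by
        rw [abs_mul, abs_mul, abs_mul, abs_of_nonneg (le_of_lt hc),
          abs_of_nonneg (by positivity : (0:ℝ) ≤ (k:ℝ)+1),
          abs_of_nonneg (le_of_lt (pow_pos (hx₀ p0) k))]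
      rw [← habs, h1, abs_mul, abs_of_nonneg ht₀]
      exact mul_le_mul_of_nonneg_left (hMbound p0) ht₀
    have h3 : |v p0| = r * x₀ p0 := by
      rw [hr, div_mul_cancel₀ _ (ne_of_gt (hx₀ p0))]
    have h4 : t₀ * tvec n k B x₀ p0 = c * x₀ p0 ^ (k+1) - b p0 := by linarith [hsol p0]
    rw [h3] at h2
    -- c*(k+1)*x₀^k * r * x₀ ≤ r*(k+1)*(c x₀^{k+1} - b)
    have h5 : c * (((k:ℝ)+1) * (x₀ p0 ^ k * (r * x₀ p0)))
        = (((k:ℝ)+1) * r) * (c * x₀ p0 ^ (k+1)) := by ring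
    have h6 : t₀ * (r * (((k:ℝ)+1) * tvec n k B x₀ p0))
        = (((k:ℝ)+1) * r) * (t₀ * tvec n k B x₀ p0) := by ring
    rw [h5, h6, h4] at h2
    -- (k+1) r (c x^{k+1}) ≤ (k+1) r (c x^{k+1} - b)
    by_contra hpos
    push_neg at hpos
    have hkr : 0 < ((k:ℝ)+1) * r := by positivity
    nlinarith [h2, mul_pos hkr (hb p0)]
  funext i
  have h1 := hvr i
  have h2 : r * x₀ i ≤ 0 := mul_nonpos_of_nonpos_of_nonneg hrle (le_of_lt (hx₀ i))
  have h3 : |v i| ≤ 0 := le_trans h1 h2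
  have := abs_nonneg (v i)
  have h4 : |v i| = 0 := le_antisymm h3 this
  simpa using abs_eq_zero.mp h4

end Inj
/-- For a nonsingular M-tensor `A` and positive `b`, there are `τ₀ > 0` and a map
`x : ℝ → ℝⁿ`, infinitely differentiable on `[0, 1 + τ₀)`, whose values are positive solutions
of the homotopy equations: the positive solutions form a smooth curve in `ℝⁿ₊₊`. -/
theorem homotopy_smooth_curve (k n : ℕ) (hn : 1 ≤ n)
    (A : Fin n → (Fin (k + 1) → Fin n) → ℝ) (hA : IsNsMTensor n k A)
    (b : Fin n → ℝ) (hb : ∀ i, 0 < b i) :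
    ∃ τ₀ : ℝ, 0 < τ₀ ∧ ∃ x : ℝ → (Fin n → ℝ),
      ContDiffOn ℝ (⊤ : ℕ∞) x (Set.Ico (0 : ℝ) (1 + τ₀)) ∧
      ∀ t ∈ Set.Ico (0 : ℝ) (1 + τ₀), (∀ i, 0 < x t i) ∧
        tvec n k (fun i g => t * A i g + (1 - t) * idT n k i g) (x t) = b := by
  classical
  obtain ⟨s, B, hBnn, hsrad, hAeq⟩ := hA
  haveI hne : Nonempty (Fin n) := ⟨⟨0, hn⟩⟩
  obtain ⟨u, hupos, -, hukey⟩ := key_subinv hn hBnn hsrad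
  -- the margin ε
  set εf : Fin n → ℝ := fun i => (s * u i ^ (k+1) - tvec n k B u i) / u i ^ (k+1) with hεf
  obtain ⟨iε, -, hiε⟩ := Finset.exists_min_image Finset.univ εf
    ⟨Classical.arbitrary _, Finset.mem_univ _⟩
  set ε : ℝ := εf iε with hεdef
  have hε : 0 < ε := div_pos (by linarith [hukey iε]) (pow_pos (hupos iε) _)
  have hεs : ε ≤ s := by
    have h0 : 0 ≤ tvec n k B u iε := tvec_nonneg hBnn (fun i => le_of_lt (hupos i)) iε
    rw [hεdef, hεf]
    rw [div_le_iff₀ (pow_pos (hupos iε) _)]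
    nlinarith [pow_pos (hupos iε) (k+1)]
  have hεprop : ∀ i, tvec n k B u i ≤ (s - ε) * u i ^ (k+1) := by
    intro i
    have h1 : ε ≤ εf i := hiε i (Finset.mem_univ i)
    have h2 : εf i * u i ^ (k+1) = s * u i ^ (k+1) - tvec n k B u i := by
      rw [hεf]
      exact div_mul_cancel₀ _ (ne_of_gt (pow_pos (hupos i) _))
    nlinarith [mul_le_mul_of_nonneg_right h1 (le_of_lt (pow_pos (hupos i) (k+1)))]
  -- τ₀ and δ
  set τ₀ : ℝ := if ε < 1 then ε/(2*(1-ε)) else 1 with hτdef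
  have hτ₀ : 0 < τ₀ := by
    rw [hτdef]
    split
    · next h => exact div_pos hε (by linarith)
    · exact one_pos
  set δ : ℝ := (min ε 1)/2 with hδdef
  have hδ : 0 < δ := div_pos (lt_min hε one_pos) two_pos
  have hδle : ∀ t : ℝ, 0 ≤ t → t < 1 + τ₀ → δ ≤ 1 - t + t * ε := by
    intro t ht htlt
    rw [hτdef] at htlt
    by_cases h1 : ε < 1
    · rw [if_pos h1] at htlt
      have hδval : δ = ε/2 := by rw [hδdef, min_eq_left (le_of_lt h1)]
      have hkey : (ε/(2*(1-ε))) * (1-ε) = ε/2 := by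
        have ha : (1:ℝ) - ε ≠ 0 := by linarith
        field_simp
      have h2 : t * (1-ε) < (1 + ε/(2*(1-ε))) * (1-ε) :=
        mul_lt_mul_of_pos_right htlt (by linarith)
      rw [add_mul, one_mul, hkey] at h2
      rw [hδval]
      nlinarith [h2]
    · rw [if_neg h1] at htlt
      push_neg at h1
      have hδval : δ = 1/2 := by rw [hδdef, min_eq_right h1]
      rw [hδval]
      nlinarith [mul_nonneg ht (by linarith : (0:ℝ) ≤ ε - 1)]
  have hcpos : ∀ t ∈ Set.Ico (0:ℝ) (1+τ₀), 0 < t*s+1-t := by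
    rintro t ⟨ht0, ht1⟩
    have hδc := hδle t ht0 ht1
    nlinarith [mul_le_mul_of_nonneg_left hεs ht0]
  -- existence of positive solutions for each t
  have hex : ∀ t : ℝ, t ∈ Set.Ico (0:ℝ) (1+τ₀) → ∃ x : Fin n → ℝ, (∀ i, 0 < x i) ∧
      ∀ i, (t*s+1-t) * x i ^ (k+1) = b i + t * tvec n k B x i := by
    intro t ht
    obtain ⟨ht0, ht1⟩ := ht
    have hδc : δ ≤ 1 - t + t*ε := hδle t ht0 ht1
    have hc : 0 < t*s+1-t := hcpos t ⟨ht0, ht1⟩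
    obtain ⟨iR, -, hiR⟩ := Finset.exists_max_image Finset.univ
      (fun i => b i / (δ * u i ^ (k+1))) ⟨Classical.arbitrary _, Finset.mem_univ _⟩
    set R : ℝ := 1 + b iR / (δ * u iR ^ (k+1)) with hRdef
    have hR1 : 1 ≤ R := by
      have h0 : 0 ≤ b iR / (δ * u iR ^ (k+1)) := by
        have := hb iR
        have := hupos iR
        positivity
      rw [hRdef]; linarith
    have hRb : ∀ i, b i ≤ R^(k+1) * (δ * u i ^ (k+1)) := by
      intro i
      have h1 : b i / (δ * u i ^ (k+1)) ≤ R := by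
        refine le_trans (hiR i (Finset.mem_univ i)) ?_
        have h0 : 0 ≤ b iR / (δ * u iR ^ (k+1)) := by
          have := hb iR
          have := hupos iR
          positivity
        rw [hRdef]; linarith
      have h2 : R ≤ R^(k+1) := le_self_pow₀ (by linarith) (Nat.succ_ne_zero k)
      rw [div_le_iff₀ (by have := hupos i; positivity)] at h1
      calc b i ≤ R * (δ * u i ^ (k+1)) := h1
        _ ≤ R^(k+1) * (δ * u i ^ (k+1)) :=
          mul_le_mul_of_nonneg_right h2 (by have := hupos i; positivity)
    have hw0 : ∀ i, 0 ≤ R * u i := fun i =>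
      mul_nonneg (by linarith) (le_of_lt (hupos i))
    have hsupw : ∀ i, b i + t * tvec n k B (fun j => R * u j) i ≤ (t*s+1-t) * (R * u i) ^ (k+1) := by
      intro i
      have htv : tvec n k B (fun j => R * u j) i = R^(k+1) * tvec n k B u i := tvec_smul R u i
      have h1 : t * tvec n k B (fun j => R * u j) i ≤ t * (R^(k+1) * ((s-ε) * u i ^ (k+1))) := by
        rw [htv]
        refine mul_le_mul_of_nonneg_left (mul_le_mul_of_nonneg_left (hεprop i) ?_) ht0
        positivity
      have h2 : (R * u i) ^ (k+1) = R^(k+1) * u i ^ (k+1) := mul_pow R (u i) (k+1)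
      have h3 := hRb i
      rw [h2]
      have h4 : 0 ≤ R^(k+1) * u i ^ (k+1) := by
        have := hupos i
        positivity
      nlinarith [mul_le_mul_of_nonneg_right hδc h4]
    exact exists_pos_solution hBnn hb ht0 hc hw0 hsupw
  choose! sol hsolpos hsoleq using hex
  -- relation between Fmap and the normalized equation
  have hFeq : ∀ (t : ℝ) (x : Fin n → ℝ), Fmap n k A (t, x)
      = fun i => (t*s+1-t) * x i ^ (k+1) - t * tvec n k B x i := by
    intro t x
    rw [Fmap_eq_tvec]
    funext i
    have h1 : (fun (i : Fin n) (g : Fin (k+1) → Fin n) => t * A i g + (1 - t) * idT n k i g)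
        = fun i g => (t*s+1-t) * idT n k i g + (-t) * B i g := by
      funext i g
      simp only [hAeq]
      ring
    rw [h1, tvec_comb, tvec_idT]
    ring
  refine ⟨τ₀, hτ₀, sol, ?_, ?_⟩
  · -- smoothness
    intro t₀ ht₀
    have ht₀0 : 0 ≤ t₀ := ht₀.1
    have hc0 : 0 < t₀*s+1-t₀ := hcpos t₀ ht₀
    have hx₀pos : ∀ i, 0 < sol t₀ i := hsolpos t₀ ht₀
    have hsol' : ∀ i, (t₀*s+1-t₀) * sol t₀ i ^ (k+1) = b i + t₀ * tvec n k B (sol t₀) i :=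
      hsoleq t₀ ht₀
    set G : ℝ × (Fin n → ℝ) → ℝ × (Fin n → ℝ) := fun p => (p.1, Fmap n k A p) with hGdef
    have hGcd : ContDiff ℝ (⊤ : WithTop ℕ∞) G := contDiff_fst.prodMk (contDiff_Fmap A)
    have hDF := hasFDerivAt_Fmap A (t₀, sol t₀)
    set Ψ : (ℝ × (Fin n → ℝ)) →L[ℝ] (ℝ × (Fin n → ℝ)) :=
      (ContinuousLinearMap.fst ℝ ℝ (Fin n → ℝ)).prod (DFmap n k A (t₀, sol t₀)) with hΨdef
    have hDG : HasFDerivAt G Ψ (t₀, sol t₀) := hasFDerivAt_fst.prodMk hDF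
    -- injectivity of the derivative
    have hker : ∀ q : ℝ × (Fin n → ℝ), Ψ q = 0 → q = 0 := by
      intro q hq
      have h1 : q.1 = 0 := congrArg Prod.fst hq
      have h2 : DFmap n k A (t₀, sol t₀) q = 0 := congrArg Prod.snd hq
      have hv : ∀ i, ∑ g : Fin (k+1) → Fin n,
          ((t₀*s+1-t₀) * idT n k i g - t₀ * B i g) *
            (∑ j : Fin (k+1), (∏ l ∈ Finset.univ.erase j, sol t₀ (g l)) * q.2 (g j)) = 0 := by
        intro i
        have h3 := congrFun h2 i
        rw [DFmap_apply] at h3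
        rw [show ((0 : Fin n → ℝ) i) = (0:ℝ) from rfl] at h3
        rw [← h3]
        refine Finset.sum_congr rfl fun g _ => ?_
        simp only [hAeq, h1]
        ring
      have hq2 : q.2 = 0 := inj_lemma hBnn hb hx₀pos ht₀0 hc0 hsol' hv
      exact Prod.ext h1 (by rw [hq2]; rfl)
    have hinj : Function.Injective Ψ := by
      intro q1 q2 hq
      have h0 : Ψ (q1 - q2) = 0 := by rw [map_sub, hq, sub_self]
      exact sub_eq_zero.mp (hker _ h0)
    have hbij : Function.Bijective
        ((Ψ : (ℝ × (Fin n → ℝ)) →L[ℝ] (ℝ × (Fin n → ℝ))) :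
          (ℝ × (Fin n → ℝ)) →ₗ[ℝ] (ℝ × (Fin n → ℝ))) :=
      ⟨hinj, LinearMap.injective_iff_surjective.mp hinj⟩
    set eΨ : (ℝ × (Fin n → ℝ)) ≃L[ℝ] (ℝ × (Fin n → ℝ)) :=
      (LinearEquiv.ofBijective _ hbij).toContinuousLinearEquiv with heΨ
    have hcoe : (eΨ : (ℝ × (Fin n → ℝ)) →L[ℝ] (ℝ × (Fin n → ℝ))) = Ψ :=
      ContinuousLinearMap.ext fun z => rfl
    have hDG' : HasFDerivAt G (eΨ : (ℝ × (Fin n → ℝ)) →L[ℝ] (ℝ × (Fin n → ℝ))) (t₀, sol t₀) := by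
      rw [hcoe]; exact hDG
    have hCD : ContDiffAt ℝ (⊤ : WithTop ℕ∞) G (t₀, sol t₀) := hGcd.contDiffAt
    have hstrict : HasStrictFDerivAt G
        (eΨ : (ℝ × (Fin n → ℝ)) →L[ℝ] (ℝ × (Fin n → ℝ))) (t₀, sol t₀) :=
      hCD.hasStrictFDerivAt' hDG' (by simp)
    set inv : ℝ × (Fin n → ℝ) → ℝ × (Fin n → ℝ) := hstrict.localInverse G eΨ (t₀, sol t₀)
      with hinvdef
    have hGp₀ : G (t₀, sol t₀) = (t₀, b) := by
      have hFb : Fmap n k A (t₀, sol t₀) = b := by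
        rw [hFeq t₀ (sol t₀)]
        funext i
        show (t₀*s+1-t₀) * sol t₀ i ^ (k+1) - t₀ * tvec n k B (sol t₀) i = b i
        linarith [hsol' i]
      rw [hGdef]
      simp only [hFb]
    have hinvCD : ContDiffAt ℝ (⊤ : WithTop ℕ∞) inv (G (t₀, sol t₀)) :=
      hCD.to_localInverse hDG' (by simp)
    have hrable : inv (G (t₀, sol t₀)) = (t₀, sol t₀) := hstrict.localInverse_apply_image
    have hinv_right : ∀ᶠ z in nhds (G (t₀, sol t₀)), G (inv z) = z :=
      hstrict.eventually_right_inverse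
    have hline : Filter.Tendsto (fun t : ℝ => ((t, b) : ℝ × (Fin n → ℝ)))
        (nhds t₀) (nhds (G (t₀, sol t₀))) := by
      rw [hGp₀]
      exact (continuous_id.prodMk continuous_const).tendsto t₀
    have hev1 : ∀ᶠ t in nhds t₀, G (inv (t, b)) = (t, b) := hline.eventually hinv_right
    set y : ℝ → (Fin n → ℝ) := fun t => (inv (t, b)).2 with hydef
    have hyCD : ContDiffAt ℝ (⊤ : WithTop ℕ∞) y t₀ := by
      have h1 : ContDiffAt ℝ (⊤ : WithTop ℕ∞) (fun t : ℝ => ((t, b) : ℝ × (Fin n → ℝ))) t₀ :=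
        (contDiff_id.prodMk contDiff_const).contDiffAt
      have h2 : ContDiffAt ℝ (⊤ : WithTop ℕ∞) inv ((t₀, b) : ℝ × (Fin n → ℝ)) := by
        rw [← hGp₀]; exact hinvCD
      exact contDiff_snd.contDiffAt.comp _ (h2.comp t₀ h1)
    have hyt₀ : y t₀ = sol t₀ := by
      rw [hydef]
      simp only [← hGp₀, hrable]
    have hycont : ContinuousAt y t₀ := hyCD.continuousAt
    have hopen : IsOpen {v : Fin n → ℝ | ∀ i, 0 < v i} := by
      have hset : {v : Fin n → ℝ | ∀ i, 0 < v i}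
          = ⋂ i, (fun v : Fin n → ℝ => v i) ⁻¹' (Set.Ioi 0) := by
        ext v
        simp [Set.mem_iInter, Set.mem_preimage]
      rw [hset]
      exact isOpen_iInter_of_finite fun i => (isOpen_Ioi).preimage (continuous_apply i)
    have hev2 : ∀ᶠ t in nhds t₀, ∀ i, 0 < y t i := by
      have hmem : {v : Fin n → ℝ | ∀ i, 0 < v i} ∈ nhds (y t₀) :=
        hopen.mem_nhds (by rw [hyt₀]; exact hx₀pos)
      exact hycont.eventually_mem hmem
    have hevEq : sol =ᶠ[nhdsWithin t₀ (Set.Ico (0:ℝ) (1+τ₀))] y := by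
      have hev3 : ∀ᶠ t in nhdsWithin t₀ (Set.Ico (0:ℝ) (1+τ₀)),
          G (inv (t,b)) = (t,b) ∧ ∀ i, 0 < y t i :=
        eventually_nhdsWithin_of_eventually_nhds (hev1.and hev2)
      filter_upwards [hev3, self_mem_nhdsWithin] with t hpt htmem
      obtain ⟨hGt, hypos⟩ := hpt
      have hfst : (inv (t, b)).1 = t := congrArg Prod.fst hGt
      have hsnd : Fmap n k A (inv (t, b)) = b := congrArg Prod.snd hGt
      have hFt : Fmap n k A (t, y t) = b := by
        have hpair : inv (t,b) = (t, y t) := Prod.ext hfst rfl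
        rw [← hpair]
        exact hsnd
      have hyeq : ∀ i, (t*s+1-t) * (y t) i ^ (k+1) = b i + t * tvec n k B (y t) i := by
        intro i
        have h5 := congrFun ((hFeq t (y t)).symm.trans hFt) i
        linarith
      exact unique_pos_solution hBnn hb htmem.1 (hcpos t htmem) (hsolpos t htmem) hypos
        (hsoleq t htmem) hyeq
    exact ((hyCD.contDiffWithinAt).congr_of_eventuallyEq hevEq hyt₀.symm).of_le le_top
  · -- the solution property
    intro t ht
    refine ⟨hsolpos t ht, ?_⟩
    rw [← Fmap_eq_tvec, hFeq t (sol t)]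
    funext i
    show (t*s+1-t) * sol t i ^ (k+1) - t * tvec n k B (sol t) i = b i
    linarith [hsoleq t ht i]
end

section
/- Let m ≥ 2, n ≥ 1 and let A = sI − B ∈ ℝ^{[m,n]}, where B is a nonnegative tensor and s > ρ(B). Define τ₀ = (s − ρ(B))/(ρ(B) − s + 2) if ρ(B) − s + 2 > 0, and τ₀ = 1 otherwise. Then τ₀ > 0 and for every t ∈ [0, 1 + τ₀) the tensor t A + (1−t) I is a nonsingular M-tensor. -/
/-!
Writing `A = sI - B`, the tensor `tA + (1 - t)I` equals `(ts + 1 - t)I - tB`. For `t ≥ 0` the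
tensor `tB` is nonnegative, and its eigenvalues are exactly `t` times those of `B`, so
`ρ(tB) = tρ(B)`. It remains to check `tρ(B) < ts + 1 - t`, i.e. `t(ρ(B) - s + 1) < 1`, which is
elementary arithmetic for `0 ≤ t < 1 + τ₀`.
-/

section SpectralRadius

open scoped Pointwise

variable {n k : ℕ} {B : Fin n → (Fin (k + 1) → Fin n) → ℝ}

theorem specRad_nonneg : 0 ≤ specRad n k B :=
  Real.sSup_nonneg fun _ ⟨_, _, hr⟩ => hr ▸ norm_nonneg _

theorem IsEig.eq_zero_of_tensor_eq_zero {lam : ℂ} (h : IsEig n k 0 lam) : lam = 0 := by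
  obtain ⟨x, hx, heq⟩ := h
  obtain ⟨i, hi⟩ := Function.ne_iff.mp hx
  have := (heq i).symm
  simp only [Pi.zero_apply, Complex.ofReal_zero, zero_mul, Finset.sum_const_zero, mul_eq_zero,
    pow_eq_zero_iff', ne_eq] at this
  tauto

theorem isEig_smul_iff {t : ℝ} (ht : t ≠ 0) {lam : ℂ} :
    IsEig n k (fun i g => t * B i g) (t * lam) ↔ IsEig n k B lam := by
  have hsum : ∀ (x : Fin n → ℂ) (i : Fin n),
      ∑ g : Fin (k + 1) → Fin n, ((t * B i g : ℝ) : ℂ) * ∏ j, x (g j)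
        = t * ∑ g : Fin (k + 1) → Fin n, (B i g : ℂ) * ∏ j, x (g j) := by
    intro x i
    simp only [Complex.ofReal_mul, Finset.mul_sum, mul_assoc]
  have ht' : (t : ℂ) ≠ 0 := Complex.ofReal_ne_zero.mpr ht
  simp only [IsEig, hsum, mul_assoc, mul_right_inj' ht']

theorem specRad_smul {t : ℝ} (ht : 0 ≤ t) :
    specRad n k (fun i g => t * B i g) = t * specRad n k B := by
  rcases ht.eq_or_lt with rfl | htpos
  · rw [zero_mul]
    refine le_antisymm (Real.sSup_nonpos ?_) specRad_nonneg
    rintro r ⟨lam, hlam, rfl⟩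
    have hzero : (fun (i : Fin n) (g : Fin (k + 1) → Fin n) => (0 : ℝ) * B i g) = 0 :=
      funext fun _ => funext fun _ => zero_mul _
    rw [hzero] at hlam
    simp [hlam.eq_zero_of_tensor_eq_zero]
  · have hset : {r : ℝ | ∃ lam : ℂ, IsEig n k (fun i g => t * B i g) lam ∧ r = ‖lam‖}
        = t • {r : ℝ | ∃ lam : ℂ, IsEig n k B lam ∧ r = ‖lam‖} := by
      have hnorm : ∀ lam : ℂ, ‖(t : ℂ) * lam‖ = t * ‖lam‖ := fun lam => by
        rw [norm_mul, Complex.norm_real, Real.norm_of_nonneg ht]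
      ext r
      simp only [Set.mem_smul_set, Set.mem_ofPred_eq, smul_eq_mul]
      constructor
      · rintro ⟨mu, hmu, rfl⟩
        have hdiv : (t : ℂ) * (mu / t) = mu := mul_div_cancel₀ _ (by exact_mod_cast htpos.ne')
        rw [← hdiv] at hmu ⊢
        exact ⟨_, ⟨_, (isEig_smul_iff htpos.ne').mp hmu, rfl⟩, (hnorm _).symm⟩
      · rintro ⟨_, ⟨lam, hlam, rfl⟩, rfl⟩
        exact ⟨t * lam, (isEig_smul_iff htpos.ne').mpr hlam, (hnorm lam).symm⟩
    rw [specRad, hset, Real.sSup_smul_of_nonneg ht, smul_eq_mul, specRad]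

end SpectralRadius

/-- `τ₀` as a function of `ρ = ρ(B)` and `s`. -/
noncomputable def extensionBound (ρ s : ℝ) : ℝ :=
  if ρ - s + 2 > 0 then (s - ρ) / (ρ - s + 2) else 1

theorem extensionBound_pos {ρ s : ℝ} (h : ρ < s) : 0 < extensionBound ρ s := by
  unfold extensionBound
  split_ifs with h2
  · exact div_pos (by linarith) h2
  · exact one_pos

theorem mul_lt_of_lt_one_add_extensionBound {ρ s t : ℝ} (hρs : ρ < s) (ht0 : 0 ≤ t)
    (ht : t < 1 + extensionBound ρ s) : t * ρ < t * s + (1 - t) := by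
  unfold extensionBound at ht
  split_ifs at ht with h2
  · -- `t (ρ - s + 1)` is the mean of `t (ρ - s + 2) < 2` and `t (ρ - s) ≤ 0`
    have hone : 1 + (s - ρ) / (ρ - s + 2) = 2 / (ρ - s + 2) := by
      field_simp
      ring
    rw [hone, lt_div_iff₀ h2] at ht
    nlinarith [mul_nonpos_of_nonneg_of_nonpos ht0 (by linarith : ρ - s ≤ 0)]
  · nlinarith [mul_nonneg ht0 (by linarith : 0 ≤ s - ρ - 2)]

theorem extended_interval_isNsMTensor_general (k n : ℕ)
    (s : ℝ) (B : Fin n → (Fin (k + 1) → Fin n) → ℝ)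
    (hB : NonnegT n k B) (hs : specRad n k B < s)
    (A : Fin n → (Fin (k + 1) → Fin n) → ℝ)
    (hA : A = fun i g => s * idT n k i g - B i g)
    (τ₀ : ℝ)
    (hτ : τ₀ = if specRad n k B - s + 2 > 0 then
        (s - specRad n k B) / (specRad n k B - s + 2) else 1) :
    0 < τ₀ ∧ ∀ t ∈ Set.Ico (0 : ℝ) (1 + τ₀),
      IsNsMTensor n k (fun i g => t * A i g + (1 - t) * idT n k i g) := by
  change τ₀ = extensionBound (specRad n k B) s at hτ
  subst hτ hA
  refine ⟨extensionBound_pos hs, fun t ⟨ht0, ht⟩ => ⟨t * s + (1 - t), fun i g => t * B i g,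
    fun i g => mul_nonneg ht0 (hB i g), ?_, ?_⟩⟩
  · rw [specRad_smul ht0]
    exact mul_lt_of_lt_one_add_extensionBound hs ht0 ht
  · funext i g
    ring

/-- If `A = s I - B` with `B` nonnegative and `s > ρ(B)`, and
`τ₀ = (s - ρ(B))/(ρ(B) - s + 2)` if `ρ(B) - s + 2 > 0` and `τ₀ = 1` otherwise, then `τ₀ > 0`
and `t A + (1 - t) I` is a nonsingular M-tensor for every `t ∈ [0, 1 + τ₀)`. -/
theorem extended_interval_isNsMTensor (k n : ℕ) (hn : 1 ≤ n)
    (s : ℝ) (B : Fin n → (Fin (k + 1) → Fin n) → ℝ)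
    (hB : NonnegT n k B) (hs : specRad n k B < s)
    (A : Fin n → (Fin (k + 1) → Fin n) → ℝ)
    (hA : A = fun i g => s * idT n k i g - B i g)
    (τ₀ : ℝ)
    (hτ : τ₀ = if specRad n k B - s + 2 > 0 then
        (s - specRad n k B) / (specRad n k B - s + 2) else 1) :
    0 < τ₀ ∧ ∀ t ∈ Set.Ico (0 : ℝ) (1 + τ₀),
      IsNsMTensor n k (fun i g => t * A i g + (1 - t) * idT n k i g) :=
  extended_interval_isNsMTensor_general k n s B hB hs A hA τ₀ hτ
end
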